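/- arXiv:2310.17308 — 5 statements merged into one kernel-verified Lean document; each statement's English description precedes it below -/
import Mathlib

section
/- Under the stated setup, and assuming E[Σ_{i=1}^n Σ_{j=1}^{nᵢ} ‖c_{i,j}‖] < ∞, the wild bootstrap process D* is a martingale with respect to the filtration (F₂(t))_{t∈[0,τ]}: every component of D*(t) is integrable, D*(t) is F₂(t)-measurable for each t ∈ [0,τ], and for all 0 ≤ s ≤ t ≤ τ one has E[D*(t) | F₂(s)] = D*(s) almost surely. (Martingale part of Lemma 3.1: the wild bootstrap counting-process integral D*_{n,h} is a martingale with respect to F₂.) -/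
/-!
`D*(t)` is a sum of the centred multipliers `G i j` with `𝒟`-measurable coefficients, and the
increment `D*(t) - D*(s)` only involves the multipliers of jumps in `(s, t]`. Such a multiplier
`G k` is independent of `𝒟` and of all other multipliers, while `F₂(s)` sees it only through
`G k * 1{T k ≤ s}`, which vanishes where the coefficient of `G k` lives. There every event of
`F₂(s)` agrees with an event independent of `G k`, so each term of the increment integrates to
`E[G k] * (…) = 0` over it. Summing over `k` is legitimate because
`E|G k| ≤ (1 + E[(G k)²]) / 2 = 1` and `∑ ‖c i j‖` is integrable.
-/

open MeasureTheory ProbabilityTheory Set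

theorem exists_inter_eq_inter_of_measurableSet_sup_comap {Ω β : Type*} [MeasurableSpace β]
    {m : MeasurableSpace Ω} {X : Ω → β} {U : Set Ω} {b : β} (hX : ∀ ω ∈ U, X ω = b)
    {B : Set Ω} (hB : MeasurableSet[m ⊔ MeasurableSpace.comap X inferInstance] B) :
    ∃ B', MeasurableSet[m] B' ∧ U ∩ B = U ∩ B' := by
  have hconst : X ∘ ((↑) : U → Ω) = fun _ => b := funext fun ω => hX ω ω.2
  have htrace : (m ⊔ MeasurableSpace.comap X inferInstance).comap ((↑) : U → Ω) =
      m.comap (↑) := by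
    rw [MeasurableSpace.comap_sup, MeasurableSpace.comap_comp, hconst,
      MeasurableSpace.comap_const, sup_bot_eq]
  obtain ⟨B', hB', hpre⟩ : MeasurableSet[m.comap ((↑) : U → Ω)] ((↑) ⁻¹' B) :=
    htrace ▸ ⟨B, hB, rfl⟩
  exact ⟨B', hB', (Subtype.preimage_coe_eq_preimage_coe_iff.1 hpre).symm⟩

theorem hasSum_sum_sum_range_of_eq_zero {α M : Type*} [Fintype α] [AddCommMonoid M]
    [TopologicalSpace M] (N : α → ℕ) {f : α × ℕ → M} (hf : ∀ k, N k.1 ≤ k.2 → f k = 0) :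
    HasSum f (∑ i, ∑ j ∈ Finset.range (N i), f (i, j)) := by
  classical
  set S := (Finset.univ ×ˢ Finset.range (Finset.univ.sup N)).filter fun k => k.2 < N k.1
  have hS : ∀ k, k ∈ S ↔ k.1 ∈ Finset.univ ∧ k.2 ∈ Finset.range (N k.1) := fun k => by
    simpa [S] using fun h : k.2 < N k.1 => h.trans_le (Finset.le_sup (Finset.mem_univ k.1))
  rw [← Finset.sum_finset_product S _ _ hS]
  exact hasSum_sum_of_ne_finset_zero fun k hk => hf k (by simpa [hS] using hk)

theorem measurable_sum_range_of_measurable_bound {Ω M : Type*} [AddCommMonoid M]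
    [MeasurableSpace M] [MeasurableAdd₂ M] {m : MeasurableSpace Ω} {N : Ω → ℕ}
    (hN : Measurable[m] N) {f : ℕ → Ω → M} (hf : ∀ j, Measurable[m] (f j)) :
    Measurable[m] fun ω => ∑ j ∈ Finset.range (N ω), f j ω := by
  have hsum : Measurable fun q : Ω × ℕ => ∑ j ∈ Finset.range q.2, f j q.1 :=
    measurable_from_prod_countable_left fun b =>
      Finset.measurable_sum (Finset.range b) fun j _ => hf j
  exact hsum.comp (measurable_id.prodMk hN)

theorem lintegral_enorm_le_one_of_integral_sq_eq_one {Ω : Type*} [MeasurableSpace Ω]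
    {μ : Measure Ω} [IsProbabilityMeasure μ] {g : Ω → ℝ} (hg : ∫ ω, g ω ^ 2 ∂μ = 1) :
    ∫⁻ ω, ‖g ω‖ₑ ∂μ ≤ 1 := by
  have hsq : Integrable (fun ω => g ω ^ 2) μ := by
    by_contra h
    simp [integral_undef h] at hg
  have hbound : Integrable (fun ω => (1 + g ω ^ 2) / 2) μ :=
    ((integrable_const 1).add hsq).div_const 2
  calc ∫⁻ ω, ‖g ω‖ₑ ∂μ ≤ ∫⁻ ω, ENNReal.ofReal ((1 + g ω ^ 2) / 2) ∂μ := by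
        refine lintegral_mono fun ω => ?_
        rw [Real.enorm_eq_ofReal_abs]
        exact ENNReal.ofReal_le_ofReal (by nlinarith [sq_abs (g ω), sq_nonneg (|g ω| - 1)])
    _ = ENNReal.ofReal (∫ ω, (1 + g ω ^ 2) / 2 ∂μ) :=
        (ofReal_integral_eq_lintegral_ofReal hbound (ae_of_all _ fun ω => by positivity)).symm
    _ = 1 := by
        rw [integral_div, integral_add (integrable_const 1) hsq, hg]
        norm_num

section Series

variable {Ω ι E : Type*} [NormedAddCommGroup E] [MeasurableSpace Ω] {μ : Measure Ω} [Countable ι]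
  {f : ι → Ω → E} {F : Ω → E}

theorem integrable_of_hasSum_of_tsum_lintegral_ne_top (hF : AEStronglyMeasurable F μ)
    (hf : ∀ k, AEStronglyMeasurable (f k) μ) (hsum : ∀ ω, HasSum (fun k => f k ω) (F ω))
    (hfin : ∑' k, ∫⁻ ω, ‖f k ω‖ₑ ∂μ ≠ ⊤) :
    Integrable F μ := by
  refine ⟨hF, ?_⟩
  calc ∫⁻ ω, ‖F ω‖ₑ ∂μ ≤ ∫⁻ ω, ∑' k, ‖f k ω‖ₑ ∂μ :=
        lintegral_mono fun ω => (hsum ω).tsum_eq ▸ enorm_tsum_le_tsum_enorm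
    _ = ∑' k, ∫⁻ ω, ‖f k ω‖ₑ ∂μ := lintegral_tsum fun k => (hf k).enorm
    _ < ⊤ := hfin.lt_top

theorem setIntegral_eq_tsum_of_hasSum [NormedSpace ℝ E] [CompleteSpace E]
    (hf : ∀ k, AEStronglyMeasurable (f k) μ) (hsum : ∀ ω, HasSum (fun k => f k ω) (F ω))
    (hfin : ∑' k, ∫⁻ ω, ‖f k ω‖ₑ ∂μ ≠ ⊤) (B : Set Ω) :
    ∫ ω in B, F ω ∂μ = ∑' k, ∫ ω in B, f k ω ∂μ := by
  simp_rw [← fun ω => (hsum ω).tsum_eq]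
  refine integral_tsum (fun k => (hf k).restrict) (ne_top_of_le_ne_top hfin ?_)
  exact ENNReal.tsum_le_tsum fun k => setLIntegral_le_lintegral B _

end Series

section IndependentMultipliers

variable {Ω ι E : Type*} [NormedAddCommGroup E] [NormedSpace ℝ E] [MeasurableSpace E]
  [BorelSpace E] {𝒟 : MeasurableSpace Ω} [m0 : MeasurableSpace Ω] {μ : Measure Ω}

theorem lintegral_enorm_smul_eq_mul_of_indep {g : Ω → ℝ} {A : Ω → E} (h𝒟 : 𝒟 ≤ m0)
    (hg : Measurable g) (hind : Indep (MeasurableSpace.comap g inferInstance) 𝒟 μ)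
    (hA : StronglyMeasurable[𝒟] A) :
    ∫⁻ ω, ‖g ω • A ω‖ₑ ∂μ = (∫⁻ ω, ‖g ω‖ₑ ∂μ) * ∫⁻ ω, ‖A ω‖ₑ ∂μ := by
  have hg' : Measurable[MeasurableSpace.comap g inferInstance] fun ω => ‖g ω‖ₑ :=
    measurable_enorm.comp (Measurable.of_comap_le le_rfl)
  simp_rw [enorm_smul]
  exact lintegral_mul_eq_lintegral_mul_lintegral_of_independent_measurableSpace hg.comap_le h𝒟
    hind hg' (measurable_enorm.comp hA.measurable)

theorem tsum_lintegral_enorm_smul_le [Countable ι] {G : ι → Ω → ℝ} {A : ι → Ω → E}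
    (h𝒟 : 𝒟 ≤ m0) (hG : ∀ k, Measurable (G k))
    (hind : ∀ k, Indep (MeasurableSpace.comap (G k) inferInstance) 𝒟 μ)
    (hG_le : ∀ k, ∫⁻ ω, ‖G k ω‖ₑ ∂μ ≤ 1) (hA : ∀ k, StronglyMeasurable[𝒟] (A k)) :
    ∑' k, ∫⁻ ω, ‖G k ω • A k ω‖ₑ ∂μ ≤ ∫⁻ ω, ∑' k, ‖A k ω‖ₑ ∂μ := by
  rw [lintegral_tsum fun k => ((hA k).mono h𝒟).measurable.enorm.aemeasurable]
  refine ENNReal.tsum_le_tsum fun k => ?_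
  rw [lintegral_enorm_smul_eq_mul_of_indep h𝒟 (hG k) (hind k) (hA k)]
  exact mul_le_of_le_one_left' (hG_le k)

theorem setIntegral_smul_eq_zero_of_indep [CompleteSpace E] [IsFiniteMeasure μ] {g Y : Ω → ℝ}
    (h𝒟 : 𝒟 ≤ m0) (hg : Measurable g) (hind : Indep (MeasurableSpace.comap g inferInstance) 𝒟 μ)
    (hg_mean : ∫ ω, g ω ∂μ = 0) {A : Ω → E} (hA : StronglyMeasurable[𝒟] A)
    (hAY : ∀ ω, Y ω ≠ 0 → A ω = 0) {B : Set Ω}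
    (hB : MeasurableSet[𝒟 ⊔ MeasurableSpace.comap Y inferInstance] B) (hBm : MeasurableSet B) :
    ∫ ω in B, g ω • A ω ∂μ = 0 := by
  -- `Y` is constant on `{Y = 0}`, so there `B` agrees with an event `B'` of `𝒟`
  obtain ⟨B', hB', hBB'⟩ :=
    exists_inter_eq_inter_of_measurableSet_sup_comap (U := {ω | Y ω = 0}) (fun _ h => h) hB
  have hind_eq : B.indicator (fun ω => g ω • A ω) = fun ω => g ω • B'.indicator A ω := by
    funext ω
    by_cases hω : Y ω = 0
    · have hmem : ω ∈ B ↔ ω ∈ B' := by simpa [hω] using Set.ext_iff.1 hBB' ω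
      by_cases hB'ω : ω ∈ B' <;> simp [hB'ω, hmem]
    · by_cases hBω : ω ∈ B <;> by_cases hB'ω : ω ∈ B' <;> simp [hBω, hB'ω, hAY ω hω]
  have hB'A : StronglyMeasurable[𝒟] (B'.indicator A) := hA.indicator hB'
  have hindep_fun : IndepFun g (B'.indicator A) μ :=
    indep_of_indep_of_le_right hind hB'A.measurable.comap_le
  rw [← integral_indicator hBm, hind_eq,
    hindep_fun.integral_fun_smul_eq_smul_integral hg.aestronglyMeasurable
      (hB'A.mono h𝒟).aestronglyMeasurable, hg_mean, zero_smul]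

theorem setIntegral_smul_eq_zero_of_iIndep [CompleteSpace E] [IsFiniteMeasure μ]
    {G : ι → Ω → ℝ} (h𝒟 : 𝒟 ≤ m0) (hG : ∀ k, Measurable (G k))
    (hindep : iIndep (fun o : Option ι =>
      o.elim 𝒟 fun k => MeasurableSpace.comap (G k) inferInstance) μ)
    {X : ι → Ω → ℝ} (hX : ∀ k, Measurable[𝒟 ⊔ MeasurableSpace.comap (G k) inferInstance] (X k))
    {B : Set Ω} (hB : MeasurableSet[𝒟 ⊔ ⨆ k, MeasurableSpace.comap (X k) inferInstance] B)
    {k : ι} (hG_mean : ∫ ω, G k ω ∂μ = 0) {A : Ω → E} (hA : StronglyMeasurable[𝒟] A)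
    (hAX : ∀ ω, X k ω ≠ 0 → A ω = 0) :
    ∫ ω in B, G k ω • A ω ∂μ = 0 := by
  have hfam_le : ∀ o : Option ι,
      o.elim 𝒟 (fun k => MeasurableSpace.comap (G k) inferInstance) ≤ m0 := by
    rintro (_ | k)
    exacts [h𝒟, (hG k).comap_le]
  -- `G k` is independent of the data together with all the other multipliers
  have hle : ∀ o ∈ ({some k}ᶜ : Set (Option ι)),
      o.elim 𝒟 (fun k => MeasurableSpace.comap (G k) inferInstance) ≤
        ⨆ o ∈ ({some k}ᶜ : Set (Option ι)),
          o.elim 𝒟 (fun k => MeasurableSpace.comap (G k) inferInstance) :=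
    fun o ho => le_biSup (fun o : Option ι => o.elim 𝒟 _) ho
  have h𝒟M := hle none (by simp)
  refine setIntegral_smul_eq_zero_of_indep (iSup₂_le fun o _ => hfam_le o) (hG k)
    (by simpa using indep_biSup_compl hfam_le hindep {some k}) hG_mean (hA.mono h𝒟M) hAX
    ?_ (sup_le h𝒟 (iSup_le fun k' => (hX k').comap_le.trans (sup_le h𝒟 (hG k').comap_le)) B hB)
  refine sup_le (h𝒟M.trans le_sup_left) (iSup_le fun k' => ?_) B hB
  by_cases hk' : k' = k
  · exact hk' ▸ le_sup_right
  · exact (hX k').comap_le.trans (sup_le h𝒟M (hle (some k') (by simpa using hk'))) |>.trans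
      le_sup_left

end IndependentMultipliers

section MultiplierProcess

variable {Ω ι : Type*} {𝒟 : MeasurableSpace Ω} {G T : ι → Ω → ℝ}

/-- The wild bootstrap filtration `F₂(t)`, for multipliers `G k` attached to jump times `T k`. -/
noncomputable abbrev multiplierSigma (𝒟 : MeasurableSpace Ω) (G T : ι → Ω → ℝ) (t : ℝ) :
    MeasurableSpace Ω :=
  𝒟 ⊔ ⨆ k, MeasurableSpace.comap (fun ω => G k ω * if T k ω ≤ t then 1 else 0) inferInstance

theorem le_multiplierSigma (t : ℝ) : 𝒟 ≤ multiplierSigma 𝒟 G T t := le_sup_left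

theorem measurable_generator_multiplierSigma (t : ℝ) (k : ι) :
    Measurable[multiplierSigma 𝒟 G T t] fun ω => G k ω * if T k ω ≤ t then 1 else 0 :=
  Measurable.of_comap_le <| (le_iSup (fun k => MeasurableSpace.comap
    (fun ω => G k ω * if T k ω ≤ t then 1 else 0) inferInstance) k).trans le_sup_right

variable {E : Type*} [NormedAddCommGroup E] [NormedSpace ℝ E] [MeasurableSpace E] [BorelSpace E]
  [m0 : MeasurableSpace Ω] {μ : Measure Ω} {A : ι → Ω → E}

theorem multiplierSigma_le (h𝒟 : 𝒟 ≤ m0) (hG : ∀ k, Measurable (G k))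
    (hT : ∀ k, Measurable[𝒟] (T k)) (t : ℝ) : multiplierSigma 𝒟 G T t ≤ m0 :=
  sup_le h𝒟 <| iSup_le fun k => Measurable.comap_le <|
    (hG k).mul ((Measurable.ite (measurableSet_le (hT k) measurable_const) measurable_const
      measurable_const).mono h𝒟 le_rfl)

variable [Countable ι]

theorem tsum_lintegral_enorm_smul_indicator_ne_top (h𝒟 : 𝒟 ≤ m0) (hG : ∀ k, Measurable (G k))
    (hind : ∀ k, Indep (MeasurableSpace.comap (G k) inferInstance) 𝒟 μ)
    (hG_le : ∀ k, ∫⁻ ω, ‖G k ω‖ₑ ∂μ ≤ 1) (hT : ∀ k, Measurable[𝒟] (T k))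
    (hA : ∀ k, StronglyMeasurable[𝒟] (A k)) (hA_fin : ∫⁻ ω, ∑' k, ‖A k ω‖ₑ ∂μ ≠ ⊤)
    {I : Set ℝ} (hI : MeasurableSet I) :
    ∑' k, ∫⁻ ω, ‖G k ω • (T k ⁻¹' I).indicator (A k) ω‖ₑ ∂μ ≠ ⊤ := by
  refine ne_top_of_le_ne_top hA_fin ((tsum_lintegral_enorm_smul_le h𝒟 hG hind hG_le
    fun k => (hA k).indicator (hT k hI)).trans ?_)
  exact lintegral_mono fun ω => ENNReal.tsum_le_tsum fun k => enorm_indicator_le_enorm_self _ _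

theorem integrable_of_hasSum_smul_indicator (h𝒟 : 𝒟 ≤ m0) (hG : ∀ k, Measurable (G k))
    (hind : ∀ k, Indep (MeasurableSpace.comap (G k) inferInstance) 𝒟 μ)
    (hG_le : ∀ k, ∫⁻ ω, ‖G k ω‖ₑ ∂μ ≤ 1) (hT : ∀ k, Measurable[𝒟] (T k))
    (hA : ∀ k, StronglyMeasurable[𝒟] (A k)) (hA_fin : ∫⁻ ω, ∑' k, ‖A k ω‖ₑ ∂μ ≠ ⊤)
    {I : Set ℝ} (hI : MeasurableSet I) {F : Ω → E} (hF : AEStronglyMeasurable F μ)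
    (hsum : ∀ ω, HasSum (fun k => G k ω • (T k ⁻¹' I).indicator (A k) ω) (F ω)) :
    Integrable F μ :=
  integrable_of_hasSum_of_tsum_lintegral_ne_top hF
    (fun k => ((hG k).stronglyMeasurable.smul
      (((hA k).indicator (hT k hI)).mono h𝒟)).aestronglyMeasurable) hsum
    (tsum_lintegral_enorm_smul_indicator_ne_top h𝒟 hG hind hG_le hT hA hA_fin hI)

theorem condExp_eq_of_hasSum_smul_indicator [CompleteSpace E] [IsFiniteMeasure μ]
    (h𝒟 : 𝒟 ≤ m0) (hG : ∀ k, Measurable (G k))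
    (hindep : iIndep (fun o : Option ι =>
      o.elim 𝒟 fun k => MeasurableSpace.comap (G k) inferInstance) μ)
    (hG_mean : ∀ k, ∫ ω, G k ω ∂μ = 0) (hG_le : ∀ k, ∫⁻ ω, ‖G k ω‖ₑ ∂μ ≤ 1)
    (hT : ∀ k, Measurable[𝒟] (T k)) (hA : ∀ k, StronglyMeasurable[𝒟] (A k))
    (hA_fin : ∫⁻ ω, ∑' k, ‖A k ω‖ₑ ∂μ ≠ ⊤) {M : ℝ → Ω → E}
    (hM : ∀ r ω, HasSum (fun k => G k ω • (T k ⁻¹' Iic r).indicator (A k) ω) (M r ω))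
    (hM_meas : ∀ r, StronglyMeasurable[multiplierSigma 𝒟 G T r] (M r)) {s t : ℝ} (hst : s ≤ t) :
    μ[M t | multiplierSigma 𝒟 G T s] =ᵐ[μ] M s := by
  have hind : ∀ k, Indep (MeasurableSpace.comap (G k) inferInstance) 𝒟 μ := fun k =>
    hindep.indep (show some k ≠ none by simp)
  have hF_le := multiplierSigma_le h𝒟 hG hT
  have hint : ∀ r, Integrable (M r) μ := fun r =>
    integrable_of_hasSum_smul_indicator h𝒟 hG hind hG_le hT hA hA_fin measurableSet_Iic
      ((hM_meas r).mono (hF_le r)).aestronglyMeasurable (hM r)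
  refine (ae_eq_condExp_of_forall_setIntegral_eq (hF_le s) (hint t)
    (fun _ _ _ => (hint s).integrableOn) (fun B hB _ => ?_) (hM_meas s).aestronglyMeasurable).symm
  have hinc : ∀ ω, HasSum (fun k => G k ω • (T k ⁻¹' Ioc s t).indicator (A k) ω)
      (M t ω - M s ω) := fun ω => by
    have hdiff : ∀ k, (T k ⁻¹' Ioc s t).indicator (A k) ω =
        (T k ⁻¹' Iic t).indicator (A k) ω - (T k ⁻¹' Iic s).indicator (A k) ω := fun k => by
      rw [← Iic_sdiff_Iic, preimage_sdiff,
        indicator_sdiff (preimage_mono (Iic_subset_Iic.2 hst)), Pi.sub_apply]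
    simpa only [hdiff, smul_sub] using (hM t ω).sub (hM s ω)
  rw [eq_comm, ← sub_eq_zero, ← integral_sub (hint t).integrableOn (hint s).integrableOn,
    setIntegral_eq_tsum_of_hasSum (fun k => ((hG k).stronglyMeasurable.smul
      (((hA k).indicator (hT k measurableSet_Ioc)).mono h𝒟)).aestronglyMeasurable) hinc
      (tsum_lintegral_enorm_smul_indicator_ne_top h𝒟 hG hind hG_le hT hA hA_fin measurableSet_Ioc)]
  refine (tsum_congr fun k => ?_).trans tsum_zero
  refine setIntegral_smul_eq_zero_of_iIndep h𝒟 hG hindep (fun k => ?_) hB (hG_mean k)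
    ((hA k).indicator (hT k measurableSet_Ioc)) fun ω hω => indicator_of_notMem ?_ _
  · exact (Measurable.of_comap_le le_sup_right).mul ((Measurable.ite
      (measurableSet_le (hT k) measurable_const) measurable_const measurable_const).mono
      le_sup_left le_rfl)
  · have hTs : T k ω ≤ s := by
      by_contra h
      simp [h] at hω
    simp [hTs.not_gt]

end MultiplierProcess

section WildBootstrap

variable {Ω α : Type*} [Fintype α] (nJ : α → Ω → ℕ)

theorem hasSum_smul_indicator_eq_sum_range {κ : Type*} (T G : α → ℕ → Ω → ℝ)
    (c : α → ℕ → Ω → κ → ℝ) (a r : ℝ) (ω : Ω) :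
    HasSum (fun k : α × ℕ => G k.1 k.2 ω • (T k.1 k.2 ⁻¹' Iic r).indicator
        ({ω | k.2 < nJ k.1 ω}.indicator fun ω => a • c k.1 k.2 ω) ω)
      (fun l => a * ∑ i, ∑ j ∈ Finset.range (nJ i ω),
        c i j ω l * G i j ω * (if T i j ω ≤ r then 1 else 0)) := by
  convert hasSum_sum_sum_range_of_eq_zero (fun i => nJ i ω) fun k hk => ?_ using 1
  · ext l
    simp only [Finset.sum_apply, Finset.mul_sum]
    refine Finset.sum_congr rfl fun i _ => Finset.sum_congr rfl fun j hj => ?_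
    by_cases hr : T i j ω ≤ r <;> simp [hr, Finset.mem_range.1 hj, indicator_of_mem]
    ring
  · simp [hk.not_gt]

theorem measurable_mul_sum_range {κ : Type*} {m : MeasurableSpace Ω} {T G : α → ℕ → Ω → ℝ}
    {c : α → ℕ → Ω → κ → ℝ} (a r : ℝ) (hnJ : ∀ i, Measurable[m] (nJ i))
    (hc : ∀ i j, Measurable[m] (c i j))
    (hX : ∀ i j, Measurable[m] fun ω => G i j ω * if T i j ω ≤ r then 1 else 0) :
    Measurable[m] fun ω l => a * ∑ i, ∑ j ∈ Finset.range (nJ i ω),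
      c i j ω l * G i j ω * (if T i j ω ≤ r then 1 else 0) := by
  refine measurable_pi_lambda _ fun l => Measurable.const_mul (Finset.measurable_sum _ fun i _ =>
    measurable_sum_range_of_measurable_bound (hnJ i) fun j => ?_) _
  simp_rw [mul_assoc]
  exact ((measurable_pi_apply l).comp (hc i j)).fun_mul (hX i j)

theorem lintegral_tsum_enorm_indicator_ne_top {E : Type*} [NormedAddCommGroup E]
    [MeasurableSpace Ω] {μ : Measure Ω} {c : α → ℕ → Ω → E}
    (hc : Integrable (fun ω => ∑ i, ∑ j ∈ Finset.range (nJ i ω), ‖c i j ω‖) μ) :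
    ∫⁻ ω, ∑' k : α × ℕ, ‖{ω | k.2 < nJ k.1 ω}.indicator (c k.1 k.2) ω‖ₑ ∂μ ≠ ⊤ := by
  refine ne_of_lt (lt_of_eq_of_lt (lintegral_congr fun ω => ?_) hc.lintegral_lt_top)
  rw [(hasSum_sum_sum_range_of_eq_zero (fun i => nJ i ω) fun k hk => by
      simp [hk.not_gt]).tsum_eq, ENNReal.ofReal_sum_of_nonneg fun i _ => by positivity]
  refine Finset.sum_congr rfl fun i _ => ?_
  rw [ENNReal.ofReal_sum_of_nonneg fun j _ => norm_nonneg _]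
  refine Finset.sum_congr rfl fun j hj => ?_
  simp [Finset.mem_range.1 hj, ofReal_norm]

end WildBootstrap

theorem wild_bootstrap_process_is_martingale_general
    {Ω : Type*}
    -- the data σ-algebra 𝒟 = F₂(0), a sub-σ-algebra of the ambient one
    (𝒟 : MeasurableSpace Ω) [m0 : MeasurableSpace Ω] (h𝒟 : 𝒟 ≤ m0)
    (μ : Measure Ω) [IsProbabilityMeasure μ]
    (τ : ℝ) (p n : ℕ)
    -- jump structure: nJ i = number of jumps of individual i, T i j = jump times
    (nJ : Fin n → Ω → ℕ) (T : Fin n → ℕ → Ω → ℝ)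
    (hnJ_meas : ∀ i, Measurable[𝒟] (nJ i))
    (hT_meas : ∀ i j, Measurable[𝒟] (T i j))
    -- the wild bootstrap multipliers: i.i.d., mean 0, variance 1,
    -- jointly independent of the data σ-algebra 𝒟
    (G : Fin n → ℕ → Ω → ℝ)
    (hG_meas : ∀ i j, Measurable (G i j))
    (hG_indep : iIndep (fun o : Option (Fin n × ℕ) =>
        o.elim 𝒟 fun ij => MeasurableSpace.comap (G ij.1 ij.2) inferInstance) μ)
    (hG_mean : ∀ i j, ∫ ω, G i j ω ∂μ = 0)
    (hG_var : ∀ i j, ∫ ω, (G i j ω) ^ 2 ∂μ = 1)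
    -- the 𝒟-measurable integrand values c_{i,j} = h_{n,i}(T_{i,j}, β̂ₙ)
    (c : Fin n → ℕ → Ω → Fin p → ℝ)
    (hc_meas : ∀ i j, Measurable[𝒟] (c i j))
    -- integrability: E[Σ_{i=1}^n Σ_{j=1}^{nᵢ} ‖c_{i,j}‖] < ∞
    (hc_int : Integrable (fun ω =>
        ∑ i, ∑ j ∈ Finset.range (nJ i ω), ‖c i j ω‖) μ)
    -- the wild bootstrap filtration F₂(t)
    (F₂ : ℝ → MeasurableSpace Ω)
    (hF₂ : ∀ t, F₂ t = 𝒟 ⊔ ⨆ ij : Fin n × ℕ,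
        MeasurableSpace.comap
          (fun ω => G ij.1 ij.2 ω * (if T ij.1 ij.2 ω ≤ t then (1 : ℝ) else 0))
          inferInstance)
    -- the wild bootstrap process D*(t)
    (Dstar : ℝ → Ω → Fin p → ℝ)
    (hDstar : ∀ t ω, Dstar t ω = fun l => (Real.sqrt n)⁻¹ *
        ∑ i, ∑ j ∈ Finset.range (nJ i ω),
          c i j ω l * G i j ω * (if T i j ω ≤ t then (1 : ℝ) else 0)) :
    (∀ t ∈ Icc (0 : ℝ) τ, ∀ l : Fin p, Integrable (fun ω => Dstar t ω l) μ) ∧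
    (∀ t ∈ Icc (0 : ℝ) τ, Measurable[F₂ t] (Dstar t)) ∧
    (∀ s t : ℝ, 0 ≤ s → s ≤ t → t ≤ τ →
        μ[Dstar t | F₂ s] =ᵐ[μ] Dstar s) := by
  set G' := fun k : Fin n × ℕ => G k.1 k.2
  set T' := fun k : Fin n × ℕ => T k.1 k.2
  obtain rfl : F₂ = multiplierSigma 𝒟 G' T' := funext hF₂
  set c' : Fin n → ℕ → Ω → Fin p → ℝ := fun i j ω => (Real.sqrt n)⁻¹ • c i j ω
  set A := fun k : Fin n × ℕ => {ω | k.2 < nJ k.1 ω}.indicator (c' k.1 k.2)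
  have hsum : ∀ r ω, HasSum (fun k => G' k ω • (T' k ⁻¹' Iic r).indicator (A k) ω) (Dstar r ω) :=
    fun r ω => by
      rw [hDstar]
      exact hasSum_smul_indicator_eq_sum_range nJ T G c _ r ω
  have hmeas : ∀ r, Measurable[multiplierSigma 𝒟 G' T' r] (Dstar r) := fun r => by
    rw [funext (hDstar r)]
    exact measurable_mul_sum_range nJ _ r
      (fun i => (hnJ_meas i).mono (le_multiplierSigma r) le_rfl)
      (fun i j => (hc_meas i j).mono (le_multiplierSigma r) le_rfl)
      fun i j => measurable_generator_multiplierSigma (G := G') (T := T') r (i, j)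
  have hG : ∀ k, Measurable (G' k) := fun k => hG_meas k.1 k.2
  have hT : ∀ k, Measurable[𝒟] (T' k) := fun k => hT_meas k.1 k.2
  have hG_le : ∀ k, ∫⁻ ω, ‖G' k ω‖ₑ ∂μ ≤ 1 := fun k =>
    lintegral_enorm_le_one_of_integral_sq_eq_one (hG_var k.1 k.2)
  have hA : ∀ k, StronglyMeasurable[𝒟] (A k) := fun k =>
    ((hc_meas k.1 k.2).const_smul (Real.sqrt n)⁻¹).stronglyMeasurable.indicator
      (measurableSet_lt measurable_const (hnJ_meas k.1))
  have hA_fin : ∫⁻ ω, ∑' k, ‖A k ω‖ₑ ∂μ ≠ ⊤ := lintegral_tsum_enorm_indicator_ne_top nJ (by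
    simpa [c', norm_smul, Finset.mul_sum, abs_of_nonneg (Real.sqrt_nonneg _)]
      using hc_int.const_mul (Real.sqrt n)⁻¹)
  have hind : ∀ k, Indep (MeasurableSpace.comap (G' k) inferInstance) 𝒟 μ := fun k =>
    hG_indep.indep (show some k ≠ none by simp)
  have hint : ∀ r, Integrable (Dstar r) μ := fun r =>
    integrable_of_hasSum_smul_indicator h𝒟 hG hind hG_le hT hA hA_fin measurableSet_Iic
      ((hmeas r).mono (multiplierSigma_le h𝒟 hG hT r) le_rfl).aestronglyMeasurable (hsum r)
  exact ⟨fun t _ => (hint t).eval, fun t _ => hmeas t, fun s t _ hst _ =>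
    condExp_eq_of_hasSum_smul_indicator h𝒟 hG hG_indep (fun k => hG_mean k.1 k.2) hG_le hT hA
      hA_fin hsum (fun r => (hmeas r).stronglyMeasurable) hst⟩

/-- **Martingale part of Lemma 3.1 (Part I).**
The wild bootstrap counting-process integral
`D*(t) = n^{-1/2} Σ_{i=1}^n Σ_{j=1}^{nᵢ} c_{i,j} G_{i,j} 1{T_{i,j} ≤ t}`
is a martingale with respect to the wild bootstrap filtration `F₂`:
each component of `D*(t)` is integrable, `D*(t)` is `F₂(t)`-measurable for every
`t ∈ [0,τ]`, and `E[D*(t) | F₂(s)] = D*(s)` a.s. for all `0 ≤ s ≤ t ≤ τ`. -/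
theorem wild_bootstrap_process_is_martingale
    {Ω : Type*}
    -- the data σ-algebra 𝒟 = F₂(0), a sub-σ-algebra of the ambient one
    (𝒟 : MeasurableSpace Ω) [m0 : MeasurableSpace Ω] (h𝒟 : 𝒟 ≤ m0)
    (μ : Measure Ω) [IsProbabilityMeasure μ]
    (τ : ℝ) (hτ : 0 < τ) (p n : ℕ)
    -- jump structure: nJ i = number of jumps of individual i, T i j = jump times
    (nJ : Fin n → Ω → ℕ) (T : Fin n → ℕ → Ω → ℝ)
    (hT_pos : ∀ i ω, ∀ j < nJ i ω, 0 < T i j ω ∧ T i j ω ≤ τ)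
    (hT_mono : ∀ i ω, ∀ j k : ℕ, j < k → k < nJ i ω → T i j ω < T i k ω)
    (hnJ_meas : ∀ i, Measurable[𝒟] (nJ i))
    (hT_meas : ∀ i j, Measurable[𝒟] (T i j))
    -- the wild bootstrap multipliers: i.i.d., mean 0, variance 1,
    -- jointly independent of the data σ-algebra 𝒟
    (G : Fin n → ℕ → Ω → ℝ)
    (hG_meas : ∀ i j, Measurable (G i j))
    (hG_indep : iIndep (fun o : Option (Fin n × ℕ) =>
        o.elim 𝒟 fun ij => MeasurableSpace.comap (G ij.1 ij.2) inferInstance) μ)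
    (hG_ident : ∀ i j i' j', Measure.map (G i j) μ = Measure.map (G i' j') μ)
    (hG_mean : ∀ i j, ∫ ω, G i j ω ∂μ = 0)
    (hG_var : ∀ i j, ∫ ω, (G i j ω) ^ 2 ∂μ = 1)
    -- the 𝒟-measurable integrand values c_{i,j} = h_{n,i}(T_{i,j}, β̂ₙ)
    (c : Fin n → ℕ → Ω → Fin p → ℝ)
    (hc_meas : ∀ i j, Measurable[𝒟] (c i j))
    -- integrability: E[Σ_{i=1}^n Σ_{j=1}^{nᵢ} ‖c_{i,j}‖] < ∞
    (hc_int : Integrable (fun ω =>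
        ∑ i, ∑ j ∈ Finset.range (nJ i ω), ‖c i j ω‖) μ)
    -- the wild bootstrap filtration F₂(t)
    (F₂ : ℝ → MeasurableSpace Ω)
    (hF₂ : ∀ t, F₂ t = 𝒟 ⊔ ⨆ ij : Fin n × ℕ,
        MeasurableSpace.comap
          (fun ω => G ij.1 ij.2 ω * (if T ij.1 ij.2 ω ≤ t then (1 : ℝ) else 0))
          inferInstance)
    -- the wild bootstrap process D*(t)
    (Dstar : ℝ → Ω → Fin p → ℝ)
    (hDstar : ∀ t ω, Dstar t ω = fun l => (Real.sqrt n)⁻¹ *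
        ∑ i, ∑ j ∈ Finset.range (nJ i ω),
          c i j ω l * G i j ω * (if T i j ω ≤ t then (1 : ℝ) else 0)) :
    (∀ t ∈ Icc (0 : ℝ) τ, ∀ l : Fin p, Integrable (fun ω => Dstar t ω l) μ) ∧
    (∀ t ∈ Icc (0 : ℝ) τ, Measurable[F₂ t] (Dstar t)) ∧
    (∀ s t : ℝ, 0 ≤ s → s ≤ t → t ≤ τ →
        μ[Dstar t | F₂ s] =ᵐ[μ] Dstar s) :=
  wild_bootstrap_process_is_martingale_general 𝒟 (m0 := m0) h𝒟 μ τ p n nJ T hnJ_meas hT_meas G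
    hG_meas hG_indep hG_mean hG_var c hc_meas hc_int F₂ hF₂ Dstar hDstar
end

section
/- Under the stated setup, and assuming E[(Σ_{i=1}^n Σ_{j=1}^{nᵢ} ‖c_{i,j}‖)²] < ∞, the ℝ^{p×p}-valued process t ↦ D*(t) D*(t)ᵀ − (1/n) Σ_{i=1}^n Σ_{j=1}^{nᵢ} c_{i,j} c_{i,j}ᵀ 1{T_{i,j} ≤ t} is a martingale (entrywise) with respect to the filtration (F₂(t))_{t∈[0,τ]}. This expresses that the predictable covariation process of the wild bootstrap martingale is ⟨D*_{n,h}⟩(t) = (1/n) Σᵢ ∫₀^t h_{n,i}(u, β̂ₙ)^{⊗2} dNᵢ(u), as asserted in Lemma 3.1. -/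
/-!
Fix `s ≤ t` and `A ∈ F₂(s)`, and write `N_x(r) = 1{T_x ≤ r}` for a jump `x = (i, j)`. On each
event `{nᵢ = kᵢ for all i}`, `n` times the increment of `D*_l D*_m − ⟨D*⟩_{lm}` from `s` to `t` is
a finite sum over pairs of jumps `x, y` of the `𝒟`-measurable weights `c_{x,l} c_{y,m}` times
`G_x G_y (N_x(t) N_y(t) − N_x(s) N_y(s)) − δ_{xy} (N_x(t) − N_x(s))`.
On `{s < T_x}` the σ-algebra `F₂(s)` sees only `𝒟` and the other multipliers, which are
independent of `G_x`. Hence an off-diagonal term, a sum of terms carrying a factor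
`G_x 1{s < T_x ≤ t}` or `G_y 1{s < T_y ≤ t}`, integrates to zero over `A` since `E G = 0`, and a
diagonal term is `(G_x² − 1) 1{s < T_x ≤ t}` times a weight, which integrates to zero since
`E G² = 1`. Square integrability of `D*` follows from `E[(Σ_x |c_x| |G_x|)²] ≤ E[(Σ_x |c_x|)²]`,
by independence of `𝒟` from the multipliers and `E |G_x| |G_y| ≤ 1`.
-/

open MeasureTheory ProbabilityTheory Filter Set

open scoped ENNReal

lemma ProbabilityTheory.Indep.indepFun_of_measurable {Ω β γ : Type*} {_ : MeasurableSpace Ω}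
    [MeasurableSpace β] [MeasurableSpace γ] {μ : Measure Ω} {m₁ m₂ : MeasurableSpace Ω}
    (h : Indep m₁ m₂ μ) {f : Ω → β} {g : Ω → γ} (hf : Measurable[m₁] f)
    (hg : Measurable[m₂] g) : IndepFun f g μ :=
  (IndepFun_iff_Indep f g μ).2
    (indep_of_indep_of_le_right (indep_of_indep_of_le_left h hf.comap_le) hg.comap_le)

lemma ProbabilityTheory.lintegral_tsum_mul_sq_le_of_indep {Ω ι : Type*} [Countable ι]
    {m₁ m₂ : MeasurableSpace Ω} [m0 : MeasurableSpace Ω] {μ : Measure Ω} (h₁ : m₁ ≤ m0)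
    (h₂ : m₂ ≤ m0) (hind : Indep m₁ m₂ μ) {U V : ι → Ω → ℝ≥0∞} (hU : ∀ x, Measurable[m₁] (U x))
    (hV : ∀ x, Measurable[m₂] (V x)) (hV1 : ∀ x y, ∫⁻ ω, V x ω * V y ω ∂μ ≤ 1) :
    ∫⁻ ω, (∑' x, U x ω * V x ω) ^ 2 ∂μ ≤ ∫⁻ ω, (∑' x, U x ω) ^ 2 ∂μ := by
  have hsq : ∀ f : ι → ℝ≥0∞, (∑' x, f x) ^ 2 = ∑' x, ∑' y, f x * f y := fun f => by
    simp_rw [sq, ← ENNReal.tsum_mul_right, ← ENNReal.tsum_mul_left]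
  have hUU : ∀ x y, Measurable (fun ω => U x ω * U y ω) := fun x y =>
    ((hU x).mono h₁ le_rfl).mul ((hU y).mono h₁ le_rfl)
  have hUV : ∀ x y, Measurable (fun ω => U x ω * V x ω * (U y ω * V y ω)) := fun x y =>
    (((hU x).mono h₁ le_rfl).mul ((hV x).mono h₂ le_rfl)).mul
      (((hU y).mono h₁ le_rfl).mul ((hV y).mono h₂ le_rfl))
  simp_rw [hsq]
  rw [lintegral_tsum fun x => (Measurable.tsum (hUV x)).aemeasurable,
    lintegral_tsum fun x => (Measurable.tsum (hUU x)).aemeasurable]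
  refine ENNReal.tsum_le_tsum fun x => ?_
  rw [lintegral_tsum fun y => (hUV x y).aemeasurable,
    lintegral_tsum fun y => (hUU x y).aemeasurable]
  refine ENNReal.tsum_le_tsum fun y => ?_
  calc ∫⁻ ω, U x ω * V x ω * (U y ω * V y ω) ∂μ
      = ∫⁻ ω, (U x ω * U y ω) * (V x ω * V y ω) ∂μ := by
        congr 1; funext ω; ring
    _ = (∫⁻ ω, U x ω * U y ω ∂μ) * ∫⁻ ω, V x ω * V y ω ∂μ :=
        lintegral_mul_eq_lintegral_mul_lintegral_of_independent_measurableSpace h₁ h₂ hind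
          ((hU x).mul (hU y)) ((hV x).mul (hV y))
    _ ≤ ∫⁻ ω, U x ω * U y ω ∂μ := mul_le_of_le_one_right' (hV1 x y)

namespace WildBootstrap

noncomputable section

variable {Ω ι : Type*}

abbrev sourceSigma (𝒟 : MeasurableSpace Ω) (G : ι → Ω → ℝ) (o : Option ι) : MeasurableSpace Ω :=
  o.elim 𝒟 fun x => MeasurableSpace.comap (G x) inferInstance

abbrev sourceSigmaCompl (𝒟 : MeasurableSpace Ω) (G : ι → Ω → ℝ) (o : Option ι) :
    MeasurableSpace Ω :=
  ⨆ o' ∈ ({o}ᶜ : Set (Option ι)), sourceSigma 𝒟 G o'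

def jumpIndicator (T : ι → Ω → ℝ) (r : ℝ) (x : ι) (ω : Ω) : ℝ :=
  if T x ω ≤ r then 1 else 0

def revealedMultiplier (G T : ι → Ω → ℝ) (r : ℝ) (x : ι) (ω : Ω) : ℝ :=
  G x ω * jumpIndicator T r x ω

abbrev wildBootstrapFiltration (𝒟 : MeasurableSpace Ω) (G T : ι → Ω → ℝ) (r : ℝ) :
    MeasurableSpace Ω :=
  𝒟 ⊔ ⨆ x, MeasurableSpace.comap (revealedMultiplier G T r x) inferInstance

section JumpIndicator

variable {T : ι → Ω → ℝ} {x y : ι} {ω : Ω}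

lemma abs_jumpIndicator_le_one (r : ℝ) : |jumpIndicator T r x ω| ≤ 1 := by
  unfold jumpIndicator; split_ifs <;> norm_num

lemma abs_jumpIndicator_sub_le_one (s t : ℝ) :
    |jumpIndicator T t x ω - jumpIndicator T s y ω| ≤ 1 := by
  unfold jumpIndicator; split_ifs <;> norm_num

lemma abs_jumpIndicator_mul_sub_le_one (s t : ℝ) :
    |jumpIndicator T t x ω * jumpIndicator T t y ω -
      jumpIndicator T s x ω * jumpIndicator T s y ω| ≤ 1 := by
  unfold jumpIndicator; split_ifs <;> norm_num

lemma jumpIndicator_mul_self (r : ℝ) :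
    jumpIndicator T r x ω * jumpIndicator T r x ω = jumpIndicator T r x ω := by
  unfold jumpIndicator; split_ifs <;> norm_num

lemma jumpIndicator_sub_eq_zero {s t : ℝ} (hst : s ≤ t) (h : T x ω ≤ s) :
    jumpIndicator T t x ω - jumpIndicator T s x ω = 0 := by
  simp [jumpIndicator, h, h.trans hst]

end JumpIndicator

section Measurability

variable {𝒟 : MeasurableSpace Ω} {G T : ι → Ω → ℝ}

lemma sourceSigma_le_compl {o o' : Option ι} (h : o' ≠ o) :
    sourceSigma 𝒟 G o' ≤ sourceSigmaCompl 𝒟 G o :=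
  le_iSup₂ (f := fun o' (_ : o' ∈ ({o}ᶜ : Set (Option ι))) => sourceSigma 𝒟 G o') o' h

lemma le_sourceSigmaCompl_some (x : ι) : 𝒟 ≤ sourceSigmaCompl 𝒟 G (some x) :=
  sourceSigma_le_compl (o' := none) (Option.some_ne_none x).symm

lemma measurable_sourceSigmaCompl {o : Option ι} {y : ι} (h : some y ≠ o) :
    Measurable[sourceSigmaCompl 𝒟 G o] (G y) :=
  Measurable.of_comap_le (sourceSigma_le_compl h)

lemma measurable_jumpIndicator (hT : ∀ x, Measurable[𝒟] (T x)) (r : ℝ) (x : ι) :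
    Measurable[𝒟] (jumpIndicator T r x) :=
  Measurable.ite (hT x measurableSet_Iic) measurable_const measurable_const

lemma measurable_revealedMultiplier_compl (hT : ∀ x, Measurable[𝒟] (T x)) (r : ℝ)
    {x y : ι} (h : y ≠ x) :
    Measurable[sourceSigmaCompl 𝒟 G (some x)] (revealedMultiplier G T r y) :=
  (measurable_sourceSigmaCompl (by simpa using h)).mul
    ((measurable_jumpIndicator hT r y).mono (le_sourceSigmaCompl_some x) le_rfl)

lemma le_wildBootstrapFiltration (r : ℝ) : 𝒟 ≤ wildBootstrapFiltration 𝒟 G T r :=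
  le_sup_left

lemma measurable_revealedMultiplier (r : ℝ) (x : ι) :
    Measurable[wildBootstrapFiltration 𝒟 G T r] (revealedMultiplier G T r x) :=
  Measurable.of_comap_le (le_sup_of_le_right (le_iSup
    (fun x => MeasurableSpace.comap (revealedMultiplier G T r x) inferInstance) x))

/-- Before `T x`, the filtration carries no information about `G x`. -/
lemma exists_inter_eq_of_measurableSet (hT : ∀ x, Measurable[𝒟] (T x)) {s : ℝ} {A : Set Ω}
    (hA : MeasurableSet[wildBootstrapFiltration 𝒟 G T s] A) (x : ι) :
    ∃ A', MeasurableSet[sourceSigmaCompl 𝒟 G (some x)] A' ∧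
      {ω | s < T x ω} ∩ A = {ω | s < T x ω} ∩ A' := by
  set E := {ω | s < T x ω}
  have hle : (wildBootstrapFiltration 𝒟 G T s).comap ((↑) : E → Ω) ≤
      (sourceSigmaCompl 𝒟 G (some x)).comap (↑) := by
    rw [wildBootstrapFiltration, MeasurableSpace.comap_sup, MeasurableSpace.comap_iSup]
    refine sup_le (MeasurableSpace.comap_mono (le_sourceSigmaCompl_some x))
      (iSup_le fun y => ?_)
    by_cases hy : y = x
    · subst hy
      have h0 : revealedMultiplier G T s y ∘ ((↑) : E → Ω) = fun _ => 0 := funext fun ω => by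
        simp [revealedMultiplier, jumpIndicator, not_le.2 (show s < T y ω from ω.2)]
      rw [MeasurableSpace.comap_comp, h0, MeasurableSpace.comap_const]
      exact bot_le
    · exact MeasurableSpace.comap_mono (measurable_revealedMultiplier_compl hT s hy).comap_le
  obtain ⟨A', hA', hpre⟩ := hle _ ⟨A, hA, rfl⟩
  exact ⟨A', hA', (Subtype.preimage_coe_eq_preimage_coe_iff.1 hpre).symm⟩

end Measurability

variable {𝒟 : MeasurableSpace Ω} [m0 : MeasurableSpace Ω] {μ : Measure Ω} {G T : ι → Ω → ℝ}

lemma sourceSigma_le (h𝒟 : 𝒟 ≤ m0) (hG : ∀ x, Measurable (G x)) :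
    ∀ o, sourceSigma 𝒟 G o ≤ m0
  | none => h𝒟
  | some x => (hG x).comap_le

lemma sourceSigmaCompl_le (h𝒟 : 𝒟 ≤ m0) (hG : ∀ x, Measurable (G x)) (o : Option ι) :
    sourceSigmaCompl 𝒟 G o ≤ m0 :=
  iSup₂_le fun o' _ => sourceSigma_le h𝒟 hG o'

lemma indep_sourceSigma_compl (h𝒟 : 𝒟 ≤ m0) (hG : ∀ x, Measurable (G x))
    (hind : iIndep (sourceSigma 𝒟 G) μ) (o : Option ι) :
    Indep (sourceSigma 𝒟 G o) (sourceSigmaCompl 𝒟 G o) μ := by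
  simpa only [iSup_singleton] using indep_biSup_compl (sourceSigma_le h𝒟 hG) hind {o}

lemma wildBootstrapFiltration_le (h𝒟 : 𝒟 ≤ m0) (hG : ∀ x, Measurable (G x))
    (hT : ∀ x, Measurable[𝒟] (T x)) (r : ℝ) : wildBootstrapFiltration 𝒟 G T r ≤ m0 :=
  sup_le h𝒟 (iSup_le fun x => Measurable.comap_le
    ((hG x).mul ((measurable_jumpIndicator hT r x).mono h𝒟 le_rfl)))

lemma integrable_mul_multipliers_mul_of_abs_le_one (h𝒟 : 𝒟 ≤ m0) (hG : ∀ x, Measurable (G x))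
    (hind : iIndep (sourceSigma 𝒟 G) μ) (hG2 : ∀ x, MemLp (G x) 2 μ) {ψ : Ω → ℝ}
    (hψ : Measurable[𝒟] ψ) (hψi : Integrable ψ μ) (x y : ι) {f : Ω → ℝ}
    (hf : AEStronglyMeasurable f μ) (hf1 : ∀ ω, |f ω| ≤ 1) :
    Integrable (fun ω => ψ ω * (G x ω * G y ω) * f ω) μ := by
  have hGG : Measurable[sourceSigmaCompl 𝒟 G none] (G x * G y) :=
    (measurable_sourceSigmaCompl (by simp)).mul (measurable_sourceSigmaCompl (by simp))
  have hψGG : Integrable (ψ * (G x * G y)) μ :=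
    ((indep_sourceSigma_compl h𝒟 hG hind none).indepFun_of_measurable hψ hGG).integrable_mul
      hψi ((hG2 x).integrable_mul (hG2 y))
  exact hψGG.mul_bdd hf (ae_of_all _ hf1)

lemma lintegral_ofReal_abs_mul_abs_le_one (hG2 : ∀ x, MemLp (G x) 2 μ)
    (hvar : ∀ x, ∫ ω, G x ω ^ 2 ∂μ = 1) (x y : ι) :
    ∫⁻ ω, ENNReal.ofReal |G x ω| * ENNReal.ofReal |G y ω| ∂μ ≤ 1 := by
  have hint : Integrable (fun ω => (G x ω ^ 2 + G y ω ^ 2) / 2) μ :=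
    ((hG2 x).integrable_sq.add (hG2 y).integrable_sq).div_const 2
  calc ∫⁻ ω, ENNReal.ofReal |G x ω| * ENNReal.ofReal |G y ω| ∂μ
      ≤ ∫⁻ ω, ENNReal.ofReal ((G x ω ^ 2 + G y ω ^ 2) / 2) ∂μ := by
        refine lintegral_mono fun ω => ?_
        rw [← ENNReal.ofReal_mul (abs_nonneg _)]
        refine ENNReal.ofReal_le_ofReal ?_
        nlinarith [sq_nonneg (|G x ω| - |G y ω|), sq_abs (G x ω), sq_abs (G y ω)]
    _ = ENNReal.ofReal (∫ ω, (G x ω ^ 2 + G y ω ^ 2) / 2 ∂μ) :=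
        (ofReal_integral_eq_lintegral_ofReal hint (ae_of_all _ fun ω => by positivity)).symm
    _ = 1 := by
        rw [integral_div, integral_add (hG2 x).integrable_sq (hG2 y).integrable_sq, hvar, hvar]
        norm_num

lemma setIntegral_comp_mul_eq_zero (h𝒟 : 𝒟 ≤ m0) (hG : ∀ x, Measurable (G x))
    (hind : iIndep (sourceSigma 𝒟 G) μ) (hT : ∀ x, Measurable[𝒟] (T x)) {s : ℝ} {A : Set Ω}
    (hA : MeasurableSet[wildBootstrapFiltration 𝒟 G T s] A) {x : ι} {g : ℝ → ℝ}
    (hg : Measurable g) (hg0 : ∫ ω, g (G x ω) ∂μ = 0) {H : Ω → ℝ}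
    (hH : Measurable[sourceSigmaCompl 𝒟 G (some x)] H) (hH0 : ∀ ω, T x ω ≤ s → H ω = 0) :
    ∫ ω in A, g (G x ω) * H ω ∂μ = 0 := by
  obtain ⟨A', hA', hAA'⟩ := exists_inter_eq_of_measurableSet hT hA x
  have hindicator : A.indicator (fun ω => g (G x ω) * H ω) =
      fun ω => g (G x ω) * A'.indicator H ω := by
    funext ω
    classical
    simp only [Set.indicator_apply]
    by_cases hω : s < T x ω
    · have hmem : ω ∈ A ↔ ω ∈ A' := by
        simpa [hω] using congrArg (ω ∈ ·) hAA'
      simp only [hmem, mul_ite, mul_zero]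
    · simp [hH0 ω (not_lt.1 hω)]
  have hmeas_g : Measurable[sourceSigma 𝒟 G (some x)] fun ω => g (G x ω) :=
    hg.comp (Measurable.of_comap_le le_rfl)
  have hmeas_H : Measurable[sourceSigmaCompl 𝒟 G (some x)] (A'.indicator H) :=
    hH.indicator hA'
  rw [← integral_indicator (wildBootstrapFiltration_le h𝒟 hG hT s _ hA), hindicator,
    ((indep_sourceSigma_compl h𝒟 hG hind (some x)).indepFun_of_measurable hmeas_g
      hmeas_H).integral_fun_mul_eq_mul_integral
      (hmeas_g.mono (sourceSigma_le h𝒟 hG _) le_rfl).aestronglyMeasurable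
      (hmeas_H.mono (sourceSigmaCompl_le h𝒟 hG _) le_rfl).aestronglyMeasurable, hg0, zero_mul]

def pairIncrement [DecidableEq ι] (G T : ι → Ω → ℝ) (s t : ℝ) (x y : ι) (ω : Ω) : ℝ :=
  revealedMultiplier G T t x ω * revealedMultiplier G T t y ω -
    revealedMultiplier G T s x ω * revealedMultiplier G T s y ω -
    if x = y then jumpIndicator T t x ω - jumpIndicator T s x ω else 0

lemma integrable_mul_pairIncrement [DecidableEq ι] (h𝒟 : 𝒟 ≤ m0)
    (hG : ∀ x, Measurable (G x)) (hind : iIndep (sourceSigma 𝒟 G) μ)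
    (hT : ∀ x, Measurable[𝒟] (T x)) (hG2 : ∀ x, MemLp (G x) 2 μ) {ψ : Ω → ℝ}
    (hψ : Measurable[𝒟] ψ) (hψi : Integrable ψ μ) (s t : ℝ) (x y : ι) :
    Integrable (fun ω => ψ ω * pairIncrement G T s t x y ω) μ := by
  have hN := fun r z => (measurable_jumpIndicator hT r z).mono h𝒟 le_rfl
  have hbilinear := integrable_mul_multipliers_mul_of_abs_le_one h𝒟 hG hind hG2 hψ hψi x y
    (((hN t x).mul (hN t y)).sub ((hN s x).mul (hN s y))).aestronglyMeasurable
    fun ω => abs_jumpIndicator_mul_sub_le_one s t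
  have hdiag := hψi.mul_bdd
    (g := fun ω => if x = y then jumpIndicator T t x ω - jumpIndicator T s x ω else 0) (c := 1)
    (by split_ifs <;> fun_prop)
    (ae_of_all _ fun ω => by split_ifs <;> simp [abs_jumpIndicator_sub_le_one])
  refine (hbilinear.sub hdiag).congr (ae_of_all _ fun ω => ?_)
  simp only [Pi.sub_apply, Pi.mul_apply, pairIncrement, revealedMultiplier]
  ring

lemma setIntegral_mul_pairIncrement_self_eq_zero [IsProbabilityMeasure μ] [DecidableEq ι]
    (h𝒟 : 𝒟 ≤ m0) (hG : ∀ x, Measurable (G x)) (hind : iIndep (sourceSigma 𝒟 G) μ)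
    (hT : ∀ x, Measurable[𝒟] (T x)) (hG2 : ∀ x, MemLp (G x) 2 μ)
    (hvar : ∀ x, ∫ ω, G x ω ^ 2 ∂μ = 1) {s t : ℝ} (hst : s ≤ t) {A : Set Ω}
    (hA : MeasurableSet[wildBootstrapFiltration 𝒟 G T s] A) {ψ : Ω → ℝ}
    (hψ : Measurable[𝒟] ψ) (x : ι) :
    ∫ ω in A, ψ ω * pairIncrement G T s t x x ω ∂μ = 0 := by
  have hpt : ∀ ω, ψ ω * pairIncrement G T s t x x ω =
      (G x ω ^ 2 - 1) * (ψ ω * (jumpIndicator T t x ω - jumpIndicator T s x ω)) := fun ω => by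
    simp only [pairIncrement, revealedMultiplier, if_true]
    linear_combination (ψ ω * G x ω ^ 2) * (jumpIndicator_mul_self (T := T) (x := x) (ω := ω) t -
      jumpIndicator_mul_self s)
  simp_rw [hpt]
  refine setIntegral_comp_mul_eq_zero h𝒟 hG hind hT hA (g := fun z => z ^ 2 - 1) (by fun_prop)
    ?_ ((hψ.mul ((measurable_jumpIndicator hT t x).sub (measurable_jumpIndicator hT s x))).mono
      (le_sourceSigmaCompl_some x) le_rfl)
    fun ω h => by rw [jumpIndicator_sub_eq_zero hst h, mul_zero]
  rw [integral_sub (hG2 x).integrable_sq (integrable_const 1), hvar]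
  simp

lemma setIntegral_mul_pairIncrement_of_ne_eq_zero [DecidableEq ι] (h𝒟 : 𝒟 ≤ m0)
    (hG : ∀ x, Measurable (G x)) (hind : iIndep (sourceSigma 𝒟 G) μ)
    (hT : ∀ x, Measurable[𝒟] (T x)) (hG2 : ∀ x, MemLp (G x) 2 μ)
    (hmean : ∀ x, ∫ ω, G x ω ∂μ = 0) {s t : ℝ} (hst : s ≤ t) {A : Set Ω}
    (hA : MeasurableSet[wildBootstrapFiltration 𝒟 G T s] A) {ψ : Ω → ℝ}
    (hψ : Measurable[𝒟] ψ) (hψi : Integrable ψ μ) {x y : ι} (hxy : x ≠ y) :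
    ∫ ω in A, ψ ω * pairIncrement G T s t x y ω ∂μ = 0 := by
  -- each of the two terms carries a multiplier that is not yet revealed at time `s`
  set term : ℝ → ι → ι → Ω → ℝ := fun r z z' ω =>
    G z ω * (ψ ω * (jumpIndicator T t z ω - jumpIndicator T s z ω) * revealedMultiplier G T r z' ω)
  have hpt : ∀ ω, ψ ω * pairIncrement G T s t x y ω = term t x y ω + term s y x ω := fun ω => by
    simp only [term, pairIncrement, revealedMultiplier, if_neg hxy]
    ring
  have hN := fun r z => (measurable_jumpIndicator hT r z).mono h𝒟 le_rfl
  have hint : ∀ r z z', Integrable (term r z z') μ := fun r z z' =>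
    (integrable_mul_multipliers_mul_of_abs_le_one h𝒟 hG hind hG2 hψ hψi z z'
      (((hN t z).sub (hN s z)).mul (hN r z')).aestronglyMeasurable fun ω => by
        rw [Pi.mul_apply, Pi.sub_apply, abs_mul]
        exact mul_le_one₀ (abs_jumpIndicator_sub_le_one s t) (abs_nonneg _)
          (abs_jumpIndicator_le_one r)).congr
      (ae_of_all _ fun ω => by
        simp only [term, revealedMultiplier, Pi.mul_apply, Pi.sub_apply]
        ring)
  have hzero : ∀ r z z', z' ≠ z → ∫ ω in A, term r z z' ω ∂μ = 0 := fun r z z' hz =>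
    setIntegral_comp_mul_eq_zero h𝒟 hG hind hT hA (g := id) measurable_id (hmean z)
      (((hψ.mul ((measurable_jumpIndicator hT t z).sub (measurable_jumpIndicator hT s z))).mono
        (le_sourceSigmaCompl_some z) le_rfl).mul (measurable_revealedMultiplier_compl hT r hz))
      fun ω h => by rw [jumpIndicator_sub_eq_zero hst h, mul_zero, zero_mul]
  simp_rw [hpt]
  rw [integral_add (hint t x y).integrableOn (hint s y x).integrableOn,
    hzero t x y hxy.symm, hzero s y x hxy, add_zero]

lemma setIntegral_mul_pairIncrement_eq_zero [IsProbabilityMeasure μ] [DecidableEq ι]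
    (h𝒟 : 𝒟 ≤ m0) (hG : ∀ x, Measurable (G x)) (hind : iIndep (sourceSigma 𝒟 G) μ)
    (hT : ∀ x, Measurable[𝒟] (T x)) (hG2 : ∀ x, MemLp (G x) 2 μ)
    (hmean : ∀ x, ∫ ω, G x ω ∂μ = 0) (hvar : ∀ x, ∫ ω, G x ω ^ 2 ∂μ = 1) {s t : ℝ}
    (hst : s ≤ t) {A : Set Ω} (hA : MeasurableSet[wildBootstrapFiltration 𝒟 G T s] A)
    {ψ : Ω → ℝ} (hψ : Measurable[𝒟] ψ) (hψi : Integrable ψ μ) (x y : ι) :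
    ∫ ω in A, ψ ω * pairIncrement G T s t x y ω ∂μ = 0 := by
  obtain rfl | hxy := eq_or_ne x y
  · exact setIntegral_mul_pairIncrement_self_eq_zero h𝒟 hG hind hT hG2 hvar hst hA hψ x
  · exact setIntegral_mul_pairIncrement_of_ne_eq_zero h𝒟 hG hind hT hG2 hmean hst hA hψ hψi hxy

end

section RandomSums

variable {Ω κ : Type*} [Fintype κ]

def jumpIndices (k : κ → ℕ) : Finset (κ × ℕ) :=
  (Finset.univ ×ˢ Finset.range (Finset.univ.sup k)).filter fun x => x.2 < k x.1

lemma mem_jumpIndices {k : κ → ℕ} {x : κ × ℕ} : x ∈ jumpIndices k ↔ x.2 < k x.1 := by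
  simp only [jumpIndices, Finset.mem_filter, Finset.mem_product, Finset.mem_univ,
    Finset.mem_range, true_and, and_iff_right_iff_imp]
  exact fun h => h.trans_le (Finset.le_sup (f := k) (Finset.mem_univ x.1))

lemma sum_jumpIndices {M : Type*} [AddCommMonoid M] (k : κ → ℕ) (F : κ × ℕ → M) :
    ∑ x ∈ jumpIndices k, F x = ∑ i, ∑ j ∈ Finset.range (k i), F (i, j) :=
  Finset.sum_finset_product _ _ _ fun x => by simp [mem_jumpIndices]

lemma ofReal_sum_jumpIndices_eq_tsum (k : κ → ℕ) {f : κ × ℕ → ℝ} (hf : ∀ x, 0 ≤ f x) :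
    ENNReal.ofReal (∑ x ∈ jumpIndices k, f x) =
      ∑' x : κ × ℕ, if x.2 < k x.1 then ENNReal.ofReal (f x) else 0 := by
  rw [tsum_eq_sum (s := jumpIndices k) fun x hx => if_neg (mt mem_jumpIndices.2 hx),
    ENNReal.ofReal_sum_of_nonneg fun x _ => hf x]
  exact Finset.sum_congr rfl fun x hx => (if_pos (mem_jumpIndices.1 hx)).symm

lemma measurable_sum_jumpIndices {M : MeasurableSpace Ω} {nJ : κ → Ω → ℕ}
    (hnJ : ∀ i, Measurable[M] (nJ i)) {f : κ × ℕ → Ω → ℝ} (hf : ∀ x, Measurable[M] (f x)) :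
    Measurable[M] fun ω => ∑ x ∈ jumpIndices (fun i => nJ i ω), f x ω :=
  Measurable.comp (g := fun q : Ω × (κ → ℕ) => ∑ x ∈ jumpIndices q.2, f x q.1)
    (f := fun ω => (ω, fun i => nJ i ω))
    (measurable_from_prod_countable_left fun k =>
      Finset.measurable_sum (jumpIndices k) fun x _ => hf x)
    (measurable_id.prodMk (measurable_pi_lambda _ hnJ))

noncomputable section

def bootstrapSum (nJ : κ → Ω → ℕ) (G T a : κ × ℕ → Ω → ℝ) (r : ℝ) (ω : Ω) : ℝ :=
  ∑ x ∈ jumpIndices (fun i => nJ i ω), a x ω * G x ω * jumpIndicator T r x ω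

def compensator (nJ : κ → Ω → ℕ) (T a b : κ × ℕ → Ω → ℝ) (r : ℝ) (ω : Ω) : ℝ :=
  ∑ x ∈ jumpIndices (fun i => nJ i ω), a x ω * b x ω * jumpIndicator T r x ω

def compensatedProduct (nJ : κ → Ω → ℕ) (G T a b : κ × ℕ → Ω → ℝ) (r : ℝ) (ω : Ω) : ℝ :=
  bootstrapSum nJ G T a r ω * bootstrapSum nJ G T b r ω - compensator nJ T a b r ω

def absSum (nJ : κ → Ω → ℕ) (a : κ × ℕ → Ω → ℝ) (ω : Ω) : ℝ :=
  ∑ x ∈ jumpIndices (fun i => nJ i ω), |a x ω|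

end

variable {nJ : κ → Ω → ℕ} {G T a b : κ × ℕ → Ω → ℝ}

lemma abs_le_absSum (a : κ × ℕ → Ω → ℝ) {ω : Ω} {x : κ × ℕ}
    (hx : x ∈ jumpIndices (fun i => nJ i ω)) : |a x ω| ≤ absSum nJ a ω :=
  Finset.single_le_sum (f := fun x => |a x ω|) (fun _ _ => abs_nonneg _) hx

lemma absSum_nonneg (a : κ × ℕ → Ω → ℝ) (ω : Ω) : 0 ≤ absSum nJ a ω :=
  Finset.sum_nonneg fun _ _ => abs_nonneg _

lemma abs_compensator_le (r : ℝ) (ω : Ω) :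
    |compensator nJ T a b r ω| ≤ absSum nJ a ω * absSum nJ b ω := by
  rw [compensator, absSum, Finset.sum_mul]
  refine (Finset.abs_sum_le_sum_abs _ _).trans (Finset.sum_le_sum fun x hx => ?_)
  rw [abs_mul, abs_mul]
  calc |a x ω| * |b x ω| * |jumpIndicator T r x ω|
      ≤ |a x ω| * absSum nJ b ω * 1 :=
        mul_le_mul (mul_le_mul_of_nonneg_left (abs_le_absSum b hx) (abs_nonneg _))
          (abs_jumpIndicator_le_one r) (abs_nonneg _)
          (mul_nonneg (abs_nonneg _) (absSum_nonneg b ω))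
    _ = |a x ω| * absSum nJ b ω := mul_one _

lemma compensatedProduct_sub_eq_sum [DecidableEq κ] {k : κ → ℕ} {ω : Ω}
    (hω : (fun i => nJ i ω) = k) (s t : ℝ) :
    compensatedProduct nJ G T a b t ω - compensatedProduct nJ G T a b s ω =
      ∑ x ∈ jumpIndices k, ∑ y ∈ jumpIndices k, a x ω * b y ω * pairIncrement G T s t x y ω := by
  have hpair : ∀ x y, a x ω * b y ω * pairIncrement G T s t x y ω =
      a x ω * G x ω * jumpIndicator T t x ω * (b y ω * G y ω * jumpIndicator T t y ω) -
      a x ω * G x ω * jumpIndicator T s x ω * (b y ω * G y ω * jumpIndicator T s y ω) -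
      if x = y then a x ω * b x ω * jumpIndicator T t x ω -
        a x ω * b x ω * jumpIndicator T s x ω else 0 := by
    intro x y
    obtain rfl | hxy := eq_or_ne x y
    · simp only [pairIncrement, revealedMultiplier, if_true]
      ring
    · simp only [pairIncrement, revealedMultiplier, if_neg hxy]
      ring
  simp only [compensatedProduct, bootstrapSum, compensator, hω, Finset.sum_mul_sum, hpair,
    Finset.sum_sub_distrib, Finset.sum_ite_eq, Finset.sum_ite_mem, Finset.inter_self]
  ring

section Measurability

variable {𝒟 : MeasurableSpace Ω}

lemma measurableSet_fiber (hnJ : ∀ i, Measurable[𝒟] (nJ i)) (k : κ → ℕ) :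
    MeasurableSet[𝒟] ((fun ω i => nJ i ω) ⁻¹' {k}) :=
  measurable_pi_lambda _ hnJ (measurableSet_singleton k)

lemma measurable_bootstrapSum (hnJ : ∀ i, Measurable[𝒟] (nJ i))
    (ha : ∀ x, Measurable[𝒟] (a x)) (r : ℝ) :
    Measurable[wildBootstrapFiltration 𝒟 G T r] (bootstrapSum nJ G T a r) :=
  measurable_sum_jumpIndices (fun i => (hnJ i).mono (le_wildBootstrapFiltration r) le_rfl)
    fun x => by
      convert ((ha x).mono (le_wildBootstrapFiltration r) le_rfl).mul
        (measurable_revealedMultiplier (G := G) (T := T) r x) using 1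
      funext ω
      exact mul_assoc _ _ _

lemma measurable_compensator (hnJ : ∀ i, Measurable[𝒟] (nJ i))
    (hT : ∀ x, Measurable[𝒟] (T x)) (ha : ∀ x, Measurable[𝒟] (a x))
    (hb : ∀ x, Measurable[𝒟] (b x)) (r : ℝ) :
    Measurable[𝒟] (compensator nJ T a b r) :=
  measurable_sum_jumpIndices hnJ fun x => ((ha x).mul (hb x)).mul (measurable_jumpIndicator hT r x)

lemma measurable_compensatedProduct (hnJ : ∀ i, Measurable[𝒟] (nJ i))
    (hT : ∀ x, Measurable[𝒟] (T x)) (ha : ∀ x, Measurable[𝒟] (a x))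
    (hb : ∀ x, Measurable[𝒟] (b x)) (r : ℝ) :
    Measurable[wildBootstrapFiltration 𝒟 G T r] (compensatedProduct nJ G T a b r) :=
  ((measurable_bootstrapSum hnJ ha r).mul (measurable_bootstrapSum hnJ hb r)).sub
    ((measurable_compensator hnJ hT ha hb r).mono (le_wildBootstrapFiltration r) le_rfl)

end Measurability

variable {𝒟 : MeasurableSpace Ω} [m0 : MeasurableSpace Ω] {μ : Measure Ω}

lemma memLp_absSum_of_le (h𝒟 : 𝒟 ≤ m0) (hnJ : ∀ i, Measurable[𝒟] (nJ i))
    (ha : ∀ x, Measurable[𝒟] (a x)) {g : Ω → ℝ} (hg : Integrable (fun ω => g ω ^ 2) μ)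
    (hle : ∀ ω, absSum nJ a ω ≤ g ω) : MemLp (absSum nJ a) 2 μ := by
  have hmeas : Measurable (absSum nJ a) :=
    measurable_sum_jumpIndices (fun i => (hnJ i).mono h𝒟 le_rfl)
      fun x => ((ha x).mono h𝒟 le_rfl).abs
  refine (memLp_two_iff_integrable_sq hmeas.aestronglyMeasurable).2
    (hg.mono' (hmeas.pow_const 2).aestronglyMeasurable (ae_of_all _ fun ω => ?_))
  rw [Real.norm_eq_abs, abs_of_nonneg (pow_nonneg (absSum_nonneg a ω) 2)]
  exact pow_le_pow_left₀ (absSum_nonneg a ω) (hle ω) 2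

lemma integrable_compensator (h𝒟 : 𝒟 ≤ m0) (hnJ : ∀ i, Measurable[𝒟] (nJ i))
    (hT : ∀ x, Measurable[𝒟] (T x)) (ha : ∀ x, Measurable[𝒟] (a x))
    (hb : ∀ x, Measurable[𝒟] (b x)) (haL : MemLp (absSum nJ a) 2 μ)
    (hbL : MemLp (absSum nJ b) 2 μ) (r : ℝ) :
    Integrable (compensator nJ T a b r) μ :=
  (haL.integrable_mul hbL).mono'
    ((measurable_compensator hnJ hT ha hb r).mono h𝒟 le_rfl).aestronglyMeasurable
    (ae_of_all _ fun ω => abs_compensator_le r ω)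

lemma lintegral_ofReal_sum_abs_mul_abs_sq_le (h𝒟 : 𝒟 ≤ m0) (hG : ∀ x, Measurable (G x))
    (hind : iIndep (sourceSigma 𝒟 G) μ) (hG2 : ∀ x, MemLp (G x) 2 μ)
    (hvar : ∀ x, ∫ ω, G x ω ^ 2 ∂μ = 1) (hnJ : ∀ i, Measurable[𝒟] (nJ i))
    (ha : ∀ x, Measurable[𝒟] (a x)) :
    ∫⁻ ω, ENNReal.ofReal (∑ x ∈ jumpIndices (fun i => nJ i ω), |a x ω| * |G x ω|) ^ 2 ∂μ ≤
      ∫⁻ ω, ENNReal.ofReal (absSum nJ a ω) ^ 2 ∂μ := by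
  have hU : ∀ x : κ × ℕ, Measurable[𝒟]
      fun ω => if x.2 < nJ x.1 ω then ENNReal.ofReal |a x ω| else 0 := fun x =>
    Measurable.ite (hnJ x.1 measurableSet_Ioi)
      (ENNReal.measurable_ofReal.comp (continuous_abs.measurable.comp (ha x))) measurable_const
  have hV : ∀ x : κ × ℕ, Measurable[sourceSigmaCompl 𝒟 G none]
      fun ω => ENNReal.ofReal |G x ω| := fun x =>
    ENNReal.measurable_ofReal.comp
      (continuous_abs.measurable.comp (measurable_sourceSigmaCompl (Option.some_ne_none x)))
  have key := lintegral_tsum_mul_sq_le_of_indep h𝒟 (sourceSigmaCompl_le h𝒟 hG none)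
    (indep_sourceSigma_compl h𝒟 hG hind none) hU hV
    (lintegral_ofReal_abs_mul_abs_le_one hG2 hvar)
  simp_rw [ite_mul, zero_mul, ← ENNReal.ofReal_mul (abs_nonneg _)] at key
  simpa only [absSum, ofReal_sum_jumpIndices_eq_tsum _ fun x => abs_nonneg (a x _),
    ofReal_sum_jumpIndices_eq_tsum _ fun x => mul_nonneg (abs_nonneg (a x _))
      (abs_nonneg (G x _))] using key

lemma memLp_sum_abs_mul_abs (h𝒟 : 𝒟 ≤ m0) (hG : ∀ x, Measurable (G x))
    (hind : iIndep (sourceSigma 𝒟 G) μ) (hG2 : ∀ x, MemLp (G x) 2 μ)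
    (hvar : ∀ x, ∫ ω, G x ω ^ 2 ∂μ = 1) (hnJ : ∀ i, Measurable[𝒟] (nJ i))
    (ha : ∀ x, Measurable[𝒟] (a x)) (haL : MemLp (absSum nJ a) 2 μ) :
    MemLp (fun ω => ∑ x ∈ jumpIndices (fun i => nJ i ω), |a x ω| * |G x ω|) 2 μ := by
  have hmeas : Measurable fun ω => ∑ x ∈ jumpIndices (fun i => nJ i ω), |a x ω| * |G x ω| :=
    measurable_sum_jumpIndices (fun i => (hnJ i).mono h𝒟 le_rfl)
      fun x => ((ha x).mono h𝒟 le_rfl).abs.mul (hG x).abs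
  have hlintegral_sq : ∀ f : Ω → ℝ, (∀ ω, 0 ≤ f ω) →
      ∫⁻ ω, ‖f ω ^ 2‖ₑ ∂μ = ∫⁻ ω, ENNReal.ofReal (f ω) ^ 2 ∂μ := fun f hf => by
    congr 1; funext ω
    rw [Real.enorm_eq_ofReal (by positivity), ENNReal.ofReal_pow (hf ω)]
  refine (memLp_two_iff_integrable_sq hmeas.aestronglyMeasurable).2
    ⟨(hmeas.pow_const 2).aestronglyMeasurable, ?_⟩
  rw [HasFiniteIntegral, hlintegral_sq _ fun ω => Finset.sum_nonneg fun _ _ => by positivity]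
  refine (lintegral_ofReal_sum_abs_mul_abs_sq_le h𝒟 hG hind hG2 hvar hnJ ha).trans_lt ?_
  rw [← hlintegral_sq (absSum nJ a) (absSum_nonneg a)]
  exact haL.integrable_sq.2

lemma memLp_bootstrapSum (h𝒟 : 𝒟 ≤ m0) (hG : ∀ x, Measurable (G x))
    (hind : iIndep (sourceSigma 𝒟 G) μ) (hT : ∀ x, Measurable[𝒟] (T x))
    (hG2 : ∀ x, MemLp (G x) 2 μ) (hvar : ∀ x, ∫ ω, G x ω ^ 2 ∂μ = 1)
    (hnJ : ∀ i, Measurable[𝒟] (nJ i)) (ha : ∀ x, Measurable[𝒟] (a x))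
    (haL : MemLp (absSum nJ a) 2 μ) (r : ℝ) :
    MemLp (bootstrapSum nJ G T a r) 2 μ := by
  refine (memLp_sum_abs_mul_abs h𝒟 hG hind hG2 hvar hnJ ha haL).of_le
    ((measurable_bootstrapSum hnJ ha r).mono
      (wildBootstrapFiltration_le h𝒟 hG hT r) le_rfl).aestronglyMeasurable
    (ae_of_all _ fun ω => ?_)
  rw [Real.norm_of_nonneg (Finset.sum_nonneg fun x _ =>
    mul_nonneg (abs_nonneg (a x ω)) (abs_nonneg (G x ω))), Real.norm_eq_abs, bootstrapSum]
  refine (Finset.abs_sum_le_sum_abs _ _).trans (Finset.sum_le_sum fun x _ => ?_)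
  rw [abs_mul, abs_mul]
  exact mul_le_of_le_one_right (by positivity) (abs_jumpIndicator_le_one r)

lemma integrable_compensatedProduct (h𝒟 : 𝒟 ≤ m0) (hG : ∀ x, Measurable (G x))
    (hind : iIndep (sourceSigma 𝒟 G) μ) (hT : ∀ x, Measurable[𝒟] (T x))
    (hG2 : ∀ x, MemLp (G x) 2 μ) (hvar : ∀ x, ∫ ω, G x ω ^ 2 ∂μ = 1)
    (hnJ : ∀ i, Measurable[𝒟] (nJ i)) (ha : ∀ x, Measurable[𝒟] (a x))
    (hb : ∀ x, Measurable[𝒟] (b x)) (haL : MemLp (absSum nJ a) 2 μ)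
    (hbL : MemLp (absSum nJ b) 2 μ) (r : ℝ) :
    Integrable (compensatedProduct nJ G T a b r) μ :=
  ((memLp_bootstrapSum h𝒟 hG hind hT hG2 hvar hnJ ha haL r).integrable_mul
    (memLp_bootstrapSum h𝒟 hG hind hT hG2 hvar hnJ hb hbL r)).sub
    (integrable_compensator h𝒟 hnJ hT ha hb haL hbL r)

lemma integrable_fiber_indicator_mul (h𝒟 : 𝒟 ≤ m0) (hnJ : ∀ i, Measurable[𝒟] (nJ i))
    (ha : ∀ x, Measurable[𝒟] (a x)) (hb : ∀ x, Measurable[𝒟] (b x))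
    (haL : MemLp (absSum nJ a) 2 μ) (hbL : MemLp (absSum nJ b) 2 μ) {k : κ → ℕ}
    {x y : κ × ℕ} (hx : x ∈ jumpIndices k) (hy : y ∈ jumpIndices k) :
    Integrable (((fun ω i => nJ i ω) ⁻¹' {k}).indicator fun ω => a x ω * b y ω) μ := by
  refine (haL.integrable_mul hbL).mono'
    ((((ha x).mul (hb y)).indicator (measurableSet_fiber hnJ k)).mono h𝒟
      le_rfl).aestronglyMeasurable
    (ae_of_all _ fun ω => ?_)
  rw [Pi.mul_apply]
  by_cases hω : ω ∈ (fun ω i => nJ i ω) ⁻¹' {k}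
  · have hk : (fun i => nJ i ω) = k := hω
    rw [Real.norm_eq_abs, indicator_of_mem hω, abs_mul]
    exact mul_le_mul (abs_le_absSum a (hk ▸ hx)) (abs_le_absSum b (hk ▸ hy)) (abs_nonneg _)
      (absSum_nonneg a ω)
  · rw [indicator_of_notMem hω, norm_zero]
    exact mul_nonneg (absSum_nonneg a ω) (absSum_nonneg b ω)

lemma setIntegral_inter_fiber_eq_zero [IsProbabilityMeasure μ] [DecidableEq κ] (h𝒟 : 𝒟 ≤ m0)
    (hG : ∀ x, Measurable (G x)) (hind : iIndep (sourceSigma 𝒟 G) μ)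
    (hT : ∀ x, Measurable[𝒟] (T x)) (hG2 : ∀ x, MemLp (G x) 2 μ)
    (hmean : ∀ x, ∫ ω, G x ω ∂μ = 0) (hvar : ∀ x, ∫ ω, G x ω ^ 2 ∂μ = 1)
    (hnJ : ∀ i, Measurable[𝒟] (nJ i)) (ha : ∀ x, Measurable[𝒟] (a x))
    (hb : ∀ x, Measurable[𝒟] (b x)) (haL : MemLp (absSum nJ a) 2 μ)
    (hbL : MemLp (absSum nJ b) 2 μ) {s t : ℝ} (hst : s ≤ t) {A : Set Ω}
    (hA : MeasurableSet[wildBootstrapFiltration 𝒟 G T s] A) (k : κ → ℕ) :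
    ∫ ω in A ∩ (fun ω i => nJ i ω) ⁻¹' {k},
      (compensatedProduct nJ G T a b t ω - compensatedProduct nJ G T a b s ω) ∂μ = 0 := by
  set L := (fun ω i => nJ i ω) ⁻¹' {k}
  have hL : MeasurableSet[𝒟] L := measurableSet_fiber hnJ k
  set ψ : κ × ℕ → κ × ℕ → Ω → ℝ := fun x y => L.indicator fun ω => a x ω * b y ω
  have hψ : ∀ x y, Measurable[𝒟] (ψ x y) := fun x y => ((ha x).mul (hb y)).indicator hL
  have hψi : ∀ x ∈ jumpIndices k, ∀ y ∈ jumpIndices k, Integrable (ψ x y) μ :=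
    fun x hx y hy => integrable_fiber_indicator_mul h𝒟 hnJ ha hb haL hbL hx hy
  have hint : ∀ x ∈ jumpIndices k, ∀ y ∈ jumpIndices k,
      Integrable (fun ω => ψ x y ω * pairIncrement G T s t x y ω) μ := fun x hx y hy =>
    integrable_mul_pairIncrement h𝒟 hG hind hT hG2 (hψ x y) (hψi x hx y hy) s t x y
  have hpt : L.indicator (fun ω => compensatedProduct nJ G T a b t ω -
      compensatedProduct nJ G T a b s ω) = fun ω =>
        ∑ x ∈ jumpIndices k, ∑ y ∈ jumpIndices k, ψ x y ω * pairIncrement G T s t x y ω := by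
    funext ω
    by_cases hω : ω ∈ L
    · simp only [ψ, indicator_of_mem hω]
      exact compensatedProduct_sub_eq_sum hω s t
    · simp [ψ, indicator_of_notMem hω]
  rw [← setIntegral_indicator (h𝒟 _ hL), hpt, integral_finsetSum _ fun x hx =>
    integrable_finsetSum _ fun y hy => (hint x hx y hy).integrableOn]
  refine Finset.sum_eq_zero fun x hx => ?_
  rw [integral_finsetSum _ fun y hy => (hint x hx y hy).integrableOn]
  exact Finset.sum_eq_zero fun y hy => setIntegral_mul_pairIncrement_eq_zero h𝒟 hG hind hT
    hG2 hmean hvar hst hA (hψ x y) (hψi x hx y hy) x y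

theorem condExp_compensatedProduct [IsProbabilityMeasure μ] [DecidableEq κ] (h𝒟 : 𝒟 ≤ m0)
    (hG : ∀ x, Measurable (G x)) (hind : iIndep (sourceSigma 𝒟 G) μ)
    (hT : ∀ x, Measurable[𝒟] (T x)) (hG2 : ∀ x, MemLp (G x) 2 μ)
    (hmean : ∀ x, ∫ ω, G x ω ∂μ = 0) (hvar : ∀ x, ∫ ω, G x ω ^ 2 ∂μ = 1)
    (hnJ : ∀ i, Measurable[𝒟] (nJ i)) (ha : ∀ x, Measurable[𝒟] (a x))
    (hb : ∀ x, Measurable[𝒟] (b x)) (haL : MemLp (absSum nJ a) 2 μ)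
    (hbL : MemLp (absSum nJ b) 2 μ) {s t : ℝ} (hst : s ≤ t) :
    μ[compensatedProduct nJ G T a b t | wildBootstrapFiltration 𝒟 G T s] =ᵐ[μ]
      compensatedProduct nJ G T a b s := by
  have hZ := integrable_compensatedProduct h𝒟 hG hind hT hG2 hvar hnJ ha hb haL hbL
  refine (ae_eq_condExp_of_forall_setIntegral_eq (wildBootstrapFiltration_le h𝒟 hG hT s)
    (hZ t) (fun _ _ _ => (hZ s).integrableOn) (fun A hA _ => ?_)
    (measurable_compensatedProduct hnJ hT ha hb s).stronglyMeasurable.aestronglyMeasurable).symm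
  have hA_eq : A = ⋃ k : κ → ℕ, A ∩ (fun ω i => nJ i ω) ⁻¹' {k} := by
    rw [← inter_iUnion, ← preimage_iUnion, iUnion_of_singleton, preimage_univ, inter_univ]
  rw [eq_comm, ← sub_eq_zero, ← integral_sub (hZ t).integrableOn (hZ s).integrableOn, hA_eq,
    integral_iUnion (f := fun ω =>
      compensatedProduct nJ G T a b t ω - compensatedProduct nJ G T a b s ω) (fun k =>
      (wildBootstrapFiltration_le h𝒟 hG hT s _ hA).inter (h𝒟 _ (measurableSet_fiber hnJ k)))
    (fun k k' hkk' => (pairwise_disjoint_fiber _ hkk').mono inter_subset_right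
      inter_subset_right) ((hZ t).sub (hZ s)).integrableOn]
  simp only [setIntegral_inter_fiber_eq_zero h𝒟 hG hind hT hG2 hmean hvar hnJ ha hb haL hbL hst
    hA, tsum_zero]

end RandomSums

end WildBootstrap

open WildBootstrap

theorem wild_bootstrap_predictable_covariation_general
    {Ω : Type*}
    -- the data σ-algebra 𝒟 = F₂(0), a sub-σ-algebra of the ambient one
    (𝒟 : MeasurableSpace Ω) [m0 : MeasurableSpace Ω] (h𝒟 : 𝒟 ≤ m0)
    (μ : Measure Ω) [IsProbabilityMeasure μ]
    (τ : ℝ) (p n : ℕ)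
    -- jump structure
    (nJ : Fin n → Ω → ℕ) (T : Fin n → ℕ → Ω → ℝ)
    (hnJ_meas : ∀ i, Measurable[𝒟] (nJ i))
    (hT_meas : ∀ i j, Measurable[𝒟] (T i j))
    -- the wild bootstrap multipliers
    (G : Fin n → ℕ → Ω → ℝ)
    (hG_meas : ∀ i j, Measurable (G i j))
    (hG_indep : iIndep (fun o : Option (Fin n × ℕ) =>
        o.elim 𝒟 fun ij => MeasurableSpace.comap (G ij.1 ij.2) inferInstance) μ)
    (hG_mean : ∀ i j, ∫ ω, G i j ω ∂μ = 0)
    (hG_var : ∀ i j, ∫ ω, (G i j ω) ^ 2 ∂μ = 1)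
    -- the 𝒟-measurable integrand values
    (c : Fin n → ℕ → Ω → Fin p → ℝ)
    (hc_meas : ∀ i j, Measurable[𝒟] (c i j))
    -- integrability: E[(Σ_{i=1}^n Σ_{j=1}^{nᵢ} ‖c_{i,j}‖)²] < ∞
    (hc_int : Integrable (fun ω =>
        (∑ i, ∑ j ∈ Finset.range (nJ i ω), ‖c i j ω‖) ^ 2) μ)
    -- the wild bootstrap filtration F₂(t)
    (F₂ : ℝ → MeasurableSpace Ω)
    (hF₂ : ∀ t, F₂ t = 𝒟 ⊔ ⨆ ij : Fin n × ℕ,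
        MeasurableSpace.comap
          (fun ω => G ij.1 ij.2 ω * (if T ij.1 ij.2 ω ≤ t then (1 : ℝ) else 0))
          inferInstance)
    -- the wild bootstrap process D*(t)
    (Dstar : ℝ → Ω → Fin p → ℝ)
    (hDstar : ∀ t ω, Dstar t ω = fun l => (Real.sqrt n)⁻¹ *
        ∑ i, ∑ j ∈ Finset.range (nJ i ω),
          c i j ω l * G i j ω * (if T i j ω ≤ t then (1 : ℝ) else 0))
    -- the compensated squared process Q(t) = D*(t)D*(t)ᵀ − ⟨D*⟩(t), entrywise
    (Q : ℝ → Ω → Fin p → Fin p → ℝ)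
    (hQ : ∀ t ω l m, Q t ω l m = Dstar t ω l * Dstar t ω m -
        (n : ℝ)⁻¹ * ∑ i, ∑ j ∈ Finset.range (nJ i ω),
          c i j ω l * c i j ω m * (if T i j ω ≤ t then (1 : ℝ) else 0)) :
    ∀ l m : Fin p,
      (∀ t ∈ Icc (0 : ℝ) τ, Integrable (fun ω => Q t ω l m) μ) ∧
      (∀ t ∈ Icc (0 : ℝ) τ, Measurable[F₂ t] (fun ω => Q t ω l m)) ∧
      (∀ s t : ℝ, 0 ≤ s → s ≤ t → t ≤ τ →
          μ[(fun ω => Q t ω l m) | F₂ s] =ᵐ[μ] fun ω => Q s ω l m) := by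
  obtain rfl : F₂ = wildBootstrapFiltration 𝒟 (Function.uncurry G) (Function.uncurry T) :=
    funext hF₂
  have hG : ∀ x : Fin n × ℕ, Measurable (Function.uncurry G x) := fun x => hG_meas x.1 x.2
  have hT : ∀ x : Fin n × ℕ, Measurable[𝒟] (Function.uncurry T x) := fun x => hT_meas x.1 x.2
  -- `hG_var` forces `G ^ 2` to be integrable: otherwise its integral would be the junk value `0`
  have hG2 : ∀ x : Fin n × ℕ, MemLp (Function.uncurry G x) 2 μ := fun x =>
    (memLp_two_iff_integrable_sq (hG x).aestronglyMeasurable).2 <|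
      Integrable.of_integral_ne_zero (f := fun ω => G x.1 x.2 ω ^ 2) (by simp [hG_var])
  set a : Fin p → Fin n × ℕ → Ω → ℝ := fun l x ω => c x.1 x.2 ω l
  have ha : ∀ l x, Measurable[𝒟] (a l x) := fun l x =>
    (measurable_pi_apply l).comp (hc_meas x.1 x.2)
  have haL : ∀ l, MemLp (absSum nJ (a l)) 2 μ := fun l =>
    memLp_absSum_of_le h𝒟 hnJ_meas (ha l) hc_int fun ω => by
      rw [absSum, sum_jumpIndices (fun i => nJ i ω) fun x => |a l x ω|]
      exact Finset.sum_le_sum fun i _ => Finset.sum_le_sum fun j _ =>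
        norm_le_pi_norm (c i j ω) l
  have hQ_eq : ∀ l m r, (fun ω => Q r ω l m) = fun ω => (n : ℝ)⁻¹ *
      compensatedProduct nJ (Function.uncurry G) (Function.uncurry T) (a l) (a m) r ω := by
    intro l m r
    funext ω
    have hsqrt : (n : ℝ)⁻¹ = (√n)⁻¹ * (√n)⁻¹ := by
      rw [← mul_inv, Real.mul_self_sqrt n.cast_nonneg]
    rw [hQ, hDstar, compensatedProduct, bootstrapSum, bootstrapSum, compensator,
      sum_jumpIndices, sum_jumpIndices, sum_jumpIndices, hsqrt]
    exact (fun u x y z : ℝ => by ring : ∀ u x y z : ℝ,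
      u * x * (u * y) - u * u * z = u * u * (x * y - z)) _ _ _ _
  intro l m
  refine ⟨fun t _ => ?_, fun t _ => ?_, fun s t _ hst _ => ?_⟩ <;> simp only [hQ_eq l m]
  · exact (integrable_compensatedProduct h𝒟 hG hG_indep hT hG2 (fun x => hG_var x.1 x.2)
      hnJ_meas (ha l) (ha m) (haL l) (haL m) t).const_mul _
  · exact (measurable_compensatedProduct hnJ_meas hT (ha l) (ha m) t).const_mul _
  · exact (condExp_smul (n : ℝ)⁻¹ _ _).trans ((condExp_compensatedProduct h𝒟 hG hG_indep hT
      hG2 (fun x => hG_mean x.1 x.2) (fun x => hG_var x.1 x.2) hnJ_meas (ha l) (ha m) (haL l)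
      (haL m) hst).const_smul _)

/-- **Predictable covariation part of Lemma 3.1 (Part I).**
The matrix-valued process
`t ↦ D*(t) D*(t)ᵀ − (1/n) Σ_{i=1}^n Σ_{j=1}^{nᵢ} c_{i,j} c_{i,j}ᵀ 1{T_{i,j} ≤ t}`
is an entrywise martingale with respect to the wild bootstrap filtration `F₂`;
this expresses that `⟨D*_{n,h}⟩(t) = (1/n) Σᵢ ∫₀^t h_{n,i}(u, β̂ₙ)^{⊗2} dNᵢ(u)`
is the predictable covariation process of the wild bootstrap martingale. -/
theorem wild_bootstrap_predictable_covariation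
    {Ω : Type*}
    -- the data σ-algebra 𝒟 = F₂(0), a sub-σ-algebra of the ambient one
    (𝒟 : MeasurableSpace Ω) [m0 : MeasurableSpace Ω] (h𝒟 : 𝒟 ≤ m0)
    (μ : Measure Ω) [IsProbabilityMeasure μ]
    (τ : ℝ) (hτ : 0 < τ) (p n : ℕ)
    -- jump structure
    (nJ : Fin n → Ω → ℕ) (T : Fin n → ℕ → Ω → ℝ)
    (hT_pos : ∀ i ω, ∀ j < nJ i ω, 0 < T i j ω ∧ T i j ω ≤ τ)
    (hT_mono : ∀ i ω, ∀ j k : ℕ, j < k → k < nJ i ω → T i j ω < T i k ω)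
    (hnJ_meas : ∀ i, Measurable[𝒟] (nJ i))
    (hT_meas : ∀ i j, Measurable[𝒟] (T i j))
    -- the wild bootstrap multipliers
    (G : Fin n → ℕ → Ω → ℝ)
    (hG_meas : ∀ i j, Measurable (G i j))
    (hG_indep : iIndep (fun o : Option (Fin n × ℕ) =>
        o.elim 𝒟 fun ij => MeasurableSpace.comap (G ij.1 ij.2) inferInstance) μ)
    (hG_ident : ∀ i j i' j', Measure.map (G i j) μ = Measure.map (G i' j') μ)
    (hG_mean : ∀ i j, ∫ ω, G i j ω ∂μ = 0)
    (hG_var : ∀ i j, ∫ ω, (G i j ω) ^ 2 ∂μ = 1)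
    -- the 𝒟-measurable integrand values
    (c : Fin n → ℕ → Ω → Fin p → ℝ)
    (hc_meas : ∀ i j, Measurable[𝒟] (c i j))
    -- integrability: E[(Σ_{i=1}^n Σ_{j=1}^{nᵢ} ‖c_{i,j}‖)²] < ∞
    (hc_int : Integrable (fun ω =>
        (∑ i, ∑ j ∈ Finset.range (nJ i ω), ‖c i j ω‖) ^ 2) μ)
    -- the wild bootstrap filtration F₂(t)
    (F₂ : ℝ → MeasurableSpace Ω)
    (hF₂ : ∀ t, F₂ t = 𝒟 ⊔ ⨆ ij : Fin n × ℕ,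
        MeasurableSpace.comap
          (fun ω => G ij.1 ij.2 ω * (if T ij.1 ij.2 ω ≤ t then (1 : ℝ) else 0))
          inferInstance)
    -- the wild bootstrap process D*(t)
    (Dstar : ℝ → Ω → Fin p → ℝ)
    (hDstar : ∀ t ω, Dstar t ω = fun l => (Real.sqrt n)⁻¹ *
        ∑ i, ∑ j ∈ Finset.range (nJ i ω),
          c i j ω l * G i j ω * (if T i j ω ≤ t then (1 : ℝ) else 0))
    -- the compensated squared process Q(t) = D*(t)D*(t)ᵀ − ⟨D*⟩(t), entrywise
    (Q : ℝ → Ω → Fin p → Fin p → ℝ)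
    (hQ : ∀ t ω l m, Q t ω l m = Dstar t ω l * Dstar t ω m -
        (n : ℝ)⁻¹ * ∑ i, ∑ j ∈ Finset.range (nJ i ω),
          c i j ω l * c i j ω m * (if T i j ω ≤ t then (1 : ℝ) else 0)) :
    ∀ l m : Fin p,
      (∀ t ∈ Icc (0 : ℝ) τ, Integrable (fun ω => Q t ω l m) μ) ∧
      (∀ t ∈ Icc (0 : ℝ) τ, Measurable[F₂ t] (fun ω => Q t ω l m)) ∧
      (∀ s t : ℝ, 0 ≤ s → s ≤ t → t ≤ τ →
          μ[(fun ω => Q t ω l m) | F₂ s] =ᵐ[μ] fun ω => Q s ω l m) :=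
  wild_bootstrap_predictable_covariation_general 𝒟 (m0 := m0) h𝒟 μ τ p n nJ T hnJ_meas hT_meas G
    hG_meas hG_indep hG_mean hG_var c hc_meas hc_int F₂ hF₂ Dstar hDstar Q hQ
end

section
/- Under the stated assumptions, sup_{t∈[0,τ]} ‖ (1/n) Σ_{i=1}^n ∫₀^t K̃ᵢ(u) λᵢ(u) du − ∫₀^t E[K̃₁(u) λ₁(u)] du ‖ → 0 in probability as n → ∞. (Uniform law of large numbers for the integrated intensity processes, equation (eq:kvgz_2_B-1), established by a partitioning/chaining argument in the proof of Lemma 2.2.) -/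
/-!
For a fixed time `u` the entries of `K̃ᵢ(u) λᵢ(u)` are pairwise i.i.d. in `i`, and integrable
for almost every `u` since `|K̃ᵢ λᵢ| ≤ C λᵢ` and `E ∫₀^τ λ₁ < ∞`. Etemadi's strong law in `L¹` then
sends `E |(1/n) Σᵢ K̃ᵢ(u) λᵢ(u) − E K̃₁(u) λ₁(u)|` to `0` for almost every `u`, and this quantity
is bounded by `2 E |K̃₁(u) λ₁(u)|`, which is integrable over `(0, τ]`; by dominated convergence
`E ∫₀^τ |(1/n) Σᵢ K̃ᵢ λᵢ − E K̃₁ λ₁| du → 0`. Pathwise, this integral dominates the supremum over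
`t ∈ [0, τ]` of the deviation of the integrated processes, so Markov's inequality gives the
convergence in probability; the sup norm of the matrix is handled entry by entry with a union
bound.
-/

open MeasureTheory ProbabilityTheory Filter Set Function
open scoped ENNReal Topology

theorem tendsto_measure_exists_le_norm_pi {Ω α ι : Type*} [MeasurableSpace Ω] {μ : Measure Ω}
    [Fintype ι] {G : ι → Type*} [∀ i, SeminormedAddGroup (G i)] {S : Set α} {ε : ℝ}
    (hε : 0 < ε) {X : ℕ → α → Ω → ∀ i, G i}
    (h : ∀ i, Tendsto (fun n => μ {ω | ∃ t ∈ S, ε ≤ ‖X n t ω i‖}) atTop (𝓝 0)) :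
    Tendsto (fun n => μ {ω | ∃ t ∈ S, ε ≤ ‖X n t ω‖}) atTop (𝓝 0) := by
  have hunion : ∀ n, {ω | ∃ t ∈ S, ε ≤ ‖X n t ω‖} ⊆ ⋃ i, {ω | ∃ t ∈ S, ε ≤ ‖X n t ω i‖} := by
    rintro n ω ⟨t, ht, hle⟩
    by_contra! hlt
    simp only [mem_iUnion, mem_ofPred_eq, not_exists, not_and, not_le] at hlt
    exact hle.not_gt ((pi_norm_lt_iff hε).2 fun i => hlt i t ht)
  refine tendsto_of_tendsto_of_tendsto_of_le_of_le tendsto_const_nhds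
    (by simpa using tendsto_finsetSum Finset.univ fun i _ => h i) (fun _ => zero_le)
    fun n => (measure_mono (hunion n)).trans (measure_iUnion_fintype_le μ _)

theorem norm_apply_apply_mul_le {ι κ : Type*} [Fintype ι] [Fintype κ] {K : ι → κ → ℝ}
    {C x : ℝ} (hK : ‖K‖ ≤ C) (hx : 0 ≤ x) (l : ι) (m : κ) : ‖K l m * x‖ ≤ C * x := by
  rw [norm_mul, Real.norm_of_nonneg hx]
  gcongr
  exact (norm_le_pi_norm (K l) m).trans ((norm_le_pi_norm K l).trans hK)

theorem integrable_uncurry_of_forall_mem_norm_le {Ω T E : Type*} [MeasurableSpace Ω]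
    [MeasurableSpace T] [NormedAddCommGroup E] {μ : Measure Ω} {ν : Measure T}
    {F : T → Ω → E} {G : T → Ω → ℝ} {s : Set T} (hs : MeasurableSet s)
    (hG : Integrable (uncurry G) ((ν.restrict s).prod μ))
    (hF : AEStronglyMeasurable (uncurry F) ((ν.restrict s).prod μ))
    (hle : ∀ᵐ ω ∂μ, ∀ u ∈ s, ‖F u ω‖ ≤ G u ω) :
    Integrable (uncurry F) ((ν.restrict s).prod μ) :=
  hG.mono' hF <| by
    filter_upwards [Measure.quasiMeasurePreserving_fst.ae (ae_restrict_mem hs),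
      Measure.quasiMeasurePreserving_snd.ae hle] with x hx h using h x.1 hx

theorem integrable_uncurry_of_integrable_intervalIntegral {Ω : Type*} [MeasurableSpace Ω]
    {μ : Measure Ω} [SFinite μ] {g : ℝ → Ω → ℝ}
    {a b : ℝ} (hab : a ≤ b) (hg0 : ∀ u ω, 0 ≤ g u ω) (hg : Measurable (uncurry g))
    (hpath : ∀ᵐ ω ∂μ, IntervalIntegrable (fun u => g u ω) volume a b)
    (hint : Integrable (fun ω => ∫ u in a..b, g u ω) μ) :
    Integrable (uncurry g) ((volume.restrict (Ioc a b)).prod μ) := by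
  rw [integrable_prod_iff' hg.aestronglyMeasurable]
  refine ⟨?_, hint.congr (ae_of_all _ fun ω => ?_)⟩
  · filter_upwards [hpath] with ω hω using (intervalIntegrable_iff_integrableOn_Ioc_of_le hab).1 hω
  · simp [intervalIntegral.integral_of_le hab, Real.norm_of_nonneg (hg0 _ ω)]

section IntegratedLLN

variable {Ω : Type*} [MeasurableSpace Ω] {μ : Measure Ω}
  {E : Type*} [NormedAddCommGroup E] [NormedSpace ℝ E]
  {T : Type*} [MeasurableSpace T] {f : ℕ → T → Ω → E}

theorem stronglyMeasurable_smul_sum_sub_integral [SFinite μ]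
    (hf : ∀ i, StronglyMeasurable (uncurry (f i))) (n : ℕ) :
    StronglyMeasurable fun x : T × Ω =>
      (n : ℝ)⁻¹ • ∑ i ∈ Finset.range n, f i x.1 x.2 - ∫ ω', f 0 x.1 ω' ∂μ := by
  have hsum := Finset.stronglyMeasurable_sum (Finset.range n) fun i _ => hf i
  have hmean : StronglyMeasurable fun t => ∫ ω', f 0 t ω' ∂μ := (hf 0).integral_prod_right'
  convert (hsum.const_smul ((n : ℝ)⁻¹)).sub (hmean.comp_measurable measurable_fst) using 1
  ext x
  simp [uncurry]

variable [MeasurableSpace E] [BorelSpace E]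

theorem lintegral_enorm_smul_sum_le_of_identDistrib {X : ℕ → Ω → E}
    (hX : ∀ i, IdentDistrib (X i) (X 0) μ μ) (n : ℕ) :
    ∫⁻ ω, ‖(n : ℝ)⁻¹ • ∑ i ∈ Finset.range n, X i ω‖ₑ ∂μ ≤ ∫⁻ ω, ‖X 0 ω‖ₑ ∂μ := by
  have hsame : ∀ i, ∫⁻ ω, ‖X i ω‖ₑ ∂μ = ∫⁻ ω, ‖X 0 ω‖ₑ ∂μ := fun i => by
    simpa only [eLpNorm_one_eq_lintegral_enorm] using (hX i).eLpNorm_eq 1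
  have hcoef : ‖(n : ℝ)⁻¹‖ₑ * n ≤ 1 := by
    rcases eq_or_ne n 0 with rfl | hn
    · simp
    · rw [← Real.enorm_natCast, ← enorm_mul, inv_mul_cancel₀ (by exact_mod_cast hn), enorm_one]
  calc ∫⁻ ω, ‖(n : ℝ)⁻¹ • ∑ i ∈ Finset.range n, X i ω‖ₑ ∂μ
      ≤ ∫⁻ ω, ‖(n : ℝ)⁻¹‖ₑ * ∑ i ∈ Finset.range n, ‖X i ω‖ₑ ∂μ := by
        gcongr with ω
        rw [enorm_smul]
        gcongr
        exact enorm_sum_le _ _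
    _ = ‖(n : ℝ)⁻¹‖ₑ * n * ∫⁻ ω, ‖X 0 ω‖ₑ ∂μ := by
        rw [lintegral_const_mul' _ _ enorm_ne_top,
          lintegral_finsetSum' _ fun i _ => (hX i).aemeasurable_fst.enorm]
        simp [hsame, mul_assoc]
    _ ≤ 1 * ∫⁻ ω, ‖X 0 ω‖ₑ ∂μ := by gcongr
    _ = ∫⁻ ω, ‖X 0 ω‖ₑ ∂μ := one_mul _

variable [IsProbabilityMeasure μ]

theorem lintegral_enorm_smul_sum_sub_integral_le {X : ℕ → Ω → E}
    (hX : ∀ i, IdentDistrib (X i) (X 0) μ μ) (n : ℕ) :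
    ∫⁻ ω, ‖(n : ℝ)⁻¹ • ∑ i ∈ Finset.range n, X i ω - ∫ ω', X 0 ω' ∂μ‖ₑ ∂μ
      ≤ 2 * ∫⁻ ω, ‖X 0 ω‖ₑ ∂μ := by
  calc ∫⁻ ω, ‖(n : ℝ)⁻¹ • ∑ i ∈ Finset.range n, X i ω - ∫ ω', X 0 ω' ∂μ‖ₑ ∂μ
      ≤ ∫⁻ ω, (‖(n : ℝ)⁻¹ • ∑ i ∈ Finset.range n, X i ω‖ₑ + ‖∫ ω', X 0 ω' ∂μ‖ₑ) ∂μ := by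
        gcongr with ω
        exact enorm_sub_le
    _ = ∫⁻ ω, ‖(n : ℝ)⁻¹ • ∑ i ∈ Finset.range n, X i ω‖ₑ ∂μ + ‖∫ ω', X 0 ω' ∂μ‖ₑ := by
        rw [lintegral_add_right _ measurable_const, lintegral_const, measure_univ, mul_one]
    _ ≤ ∫⁻ ω, ‖X 0 ω‖ₑ ∂μ + ∫⁻ ω, ‖X 0 ω‖ₑ ∂μ :=
        add_le_add (lintegral_enorm_smul_sum_le_of_identDistrib hX n)
          (enorm_integral_le_lintegral_enorm _)
    _ = 2 * ∫⁻ ω, ‖X 0 ω‖ₑ ∂μ := (two_mul _).symm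

variable [CompleteSpace E] {ν : Measure T} [SFinite ν]

theorem tendsto_lintegral_lintegral_enorm_smul_sum_sub_integral
    (hf : ∀ i, StronglyMeasurable (uncurry (f i)))
    (hindep : ∀ t, Pairwise fun i j => f i t ⟂ᵢ[μ] f j t)
    (hident : ∀ i t, IdentDistrib (f i t) (f 0 t) μ μ)
    (hint : Integrable (uncurry (f 0)) (ν.prod μ)) :
    Tendsto (fun n : ℕ => ∫⁻ t, ∫⁻ ω,
        ‖(n : ℝ)⁻¹ • ∑ i ∈ Finset.range n, f i t ω - ∫ ω', f 0 t ω' ∂μ‖ₑ ∂μ ∂ν)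
      atTop (𝓝 0) := by
  have hdom : ∫⁻ t, 2 * ∫⁻ ω, ‖f 0 t ω‖ₑ ∂μ ∂ν ≠ ∞ := by
    have hprod := lintegral_prod _ (hf 0).enorm.aemeasurable (μ := ν) (ν := μ)
    rw [lintegral_const_mul' _ _ ENNReal.ofNat_ne_top]
    exact ENNReal.mul_ne_top ENNReal.ofNat_ne_top (hprod ▸ hint.2.ne)
  have hlim : ∀ᵐ t ∂ν, Tendsto (fun n : ℕ => ∫⁻ ω,
      ‖(n : ℝ)⁻¹ • ∑ i ∈ Finset.range n, f i t ω - ∫ ω', f 0 t ω' ∂μ‖ₑ ∂μ) atTop (𝓝 0) := by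
    filter_upwards [hint.prod_right_ae] with t ht
    simpa only [eLpNorm_one_eq_lintegral_enorm] using strong_law_Lp le_rfl ENNReal.one_ne_top
      (fun i => f i t) (memLp_one_iff_integrable.2 ht) (hindep t) fun i => hident i t
  simpa using tendsto_lintegral_of_dominated_convergence _
    (fun n => ((stronglyMeasurable_smul_sum_sub_integral hf n).enorm).lintegral_prod_right')
    (fun n => ae_of_all _ fun t => lintegral_enorm_smul_sum_sub_integral_le
      (fun i => hident i t) n) hdom hlim

end IntegratedLLN

theorem enorm_smul_sum_intervalIntegral_sub_le {E : Type*} [NormedAddCommGroup E]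
    [NormedSpace ℝ E] {g : ℕ → ℝ → E} {φ : ℝ → E} {a b t : ℝ} (ht : t ∈ Icc a b)
    (hg : ∀ i, IntegrableOn (g i) (Ioc a b)) (hφ : IntegrableOn φ (Ioc a b)) (n : ℕ) :
    ‖((n : ℝ)⁻¹ • ∑ i ∈ Finset.range n, ∫ u in a..t, g i u) - ∫ u in a..t, φ u‖ₑ
      ≤ ∫⁻ u in Ioc a b, ‖(n : ℝ)⁻¹ • ∑ i ∈ Finset.range n, g i u - φ u‖ₑ := by
  have hsub : Ioc a t ⊆ Ioc a b := Ioc_subset_Ioc_right ht.2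
  have hg' : ∀ i, IntegrableOn (g i) (Ioc a t) := fun i => (hg i).mono_set hsub
  have hint : ((n : ℝ)⁻¹ • ∑ i ∈ Finset.range n, ∫ u in a..t, g i u) - ∫ u in a..t, φ u
      = ∫ u in Ioc a t, (n : ℝ)⁻¹ • ∑ i ∈ Finset.range n, g i u - φ u := by
    have hmean : IntegrableOn (fun u => (n : ℝ)⁻¹ • ∑ i ∈ Finset.range n, g i u) (Ioc a t) :=
      (integrable_finsetSum _ fun i _ => hg' i).smul _
    simp only [intervalIntegral.integral_of_le ht.1]
    rw [integral_sub hmean (hφ.mono_set hsub), integral_smul, integral_finsetSum _ fun i _ => hg' i]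
  rw [hint]
  exact (enorm_integral_le_lintegral_enorm _).trans (lintegral_mono_set hsub)

theorem tendsto_measure_exists_le_norm_smul_sum_intervalIntegral_sub {Ω E : Type*}
    [MeasurableSpace Ω] {μ : Measure Ω} [IsProbabilityMeasure μ] [NormedAddCommGroup E]
    [NormedSpace ℝ E] [CompleteSpace E] [MeasurableSpace E] [BorelSpace E]
    {f : ℕ → ℝ → Ω → E} {a b : ℝ}
    (hf : ∀ i, StronglyMeasurable (uncurry (f i)))
    (hindep : ∀ t, Pairwise fun i j => f i t ⟂ᵢ[μ] f j t)
    (hident : ∀ i t, IdentDistrib (f i t) (f 0 t) μ μ)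
    (hint : Integrable (uncurry (f 0)) ((volume.restrict (Ioc a b)).prod μ))
    (hpath : ∀ᵐ ω ∂μ, ∀ i, IntegrableOn (fun u => f i u ω) (Ioc a b)) {ε : ℝ} (hε : 0 < ε) :
    Tendsto (fun n : ℕ => μ {ω | ∃ t ∈ Icc a b, ε ≤ ‖((n : ℝ)⁻¹ • ∑ i ∈ Finset.range n,
        ∫ u in a..t, f i u ω) - ∫ u in a..t, ∫ ω', f 0 u ω' ∂μ‖}) atTop (𝓝 0) := by
  set H : ℕ → Ω → ℝ≥0∞ := fun n ω => ∫⁻ u in Ioc a b,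
    ‖(n : ℝ)⁻¹ • ∑ i ∈ Finset.range n, f i u ω - ∫ ω', f 0 u ω' ∂μ‖ₑ
  have hH_meas : ∀ n, Measurable (H n) := fun n =>
    ((stronglyMeasurable_smul_sum_sub_integral hf n).enorm.comp
      measurable_swap).lintegral_prod_right'
  have hH : Tendsto (fun n => ∫⁻ ω, H n ω ∂μ) atTop (𝓝 0) := by
    refine (tendsto_lintegral_lintegral_enorm_smul_sum_sub_integral hf hindep hident hint).congr
      fun n => ?_
    exact lintegral_lintegral_swap
      ((stronglyMeasurable_smul_sum_sub_integral hf n).enorm.aemeasurable)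
  have hmean : IntegrableOn (fun u => ∫ ω', f 0 u ω' ∂μ) (Ioc a b) := hint.integral_prod_left
  have hε' : ENNReal.ofReal ε ≠ 0 := (ENNReal.ofReal_pos.2 hε).ne'
  have hevent : ∀ n : ℕ, {ω | ∃ t ∈ Icc a b, ε ≤ ‖((n : ℝ)⁻¹ • ∑ i ∈ Finset.range n,
      ∫ u in a..t, f i u ω) - ∫ u in a..t, ∫ ω', f 0 u ω' ∂μ‖} ≤ᵐ[μ]
      {ω | ENNReal.ofReal ε ≤ H n ω} := by
    intro n
    filter_upwards [hpath] with ω hω ⟨t, ht, hle⟩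
    calc ENNReal.ofReal ε ≤ ENNReal.ofReal ‖_‖ := ENNReal.ofReal_le_ofReal hle
      _ = ‖_‖ₑ := ofReal_norm _
      _ ≤ H n ω := enorm_smul_sum_intervalIntegral_sub_le ht hω hmean n
  refine tendsto_of_tendsto_of_tendsto_of_le_of_le tendsto_const_nhds
    (by simpa using ENNReal.Tendsto.div_const hH (Or.inr hε')) (fun _ => zero_le)
    fun n => (measure_mono_ae (hevent n)).trans
      (meas_ge_le_lintegral_div (hH_meas n).aemeasurable hε' ENNReal.ofReal_ne_top)

/-- **Uniform law of large numbers (eq. (eq:kvgz_2_B-1), proof of Lemma 2.2, Part I).**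
`sup_{t∈[0,τ]} ‖(1/n) Σ_{i=1}^n ∫₀^t K̃ᵢ(u) λᵢ(u) du − ∫₀^t E[K̃₁(u) λ₁(u)] du‖ → 0`
in probability as `n → ∞`. -/
theorem uniform_lln_integrated_intensities
    {Ω : Type*} [m0 : MeasurableSpace Ω]
    (μ : Measure Ω) [IsProbabilityMeasure μ]
    (τ : ℝ) (hτ : 0 < τ) (p q : ℕ)
    -- the matrix-valued processes K̃ᵢ, jointly measurable, uniformly bounded
    (Ktilde : ℕ → ℝ → Ω → Fin p → Fin q → ℝ)
    (Ktilde_meas : ∀ i, Measurable fun x : ℝ × Ω => Ktilde i x.1 x.2)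
    (C : ℝ)
    (Ktilde_bdd : ∀ᵐ ω ∂μ, ∀ i, ∀ t ∈ Icc (0:ℝ) τ, ‖Ktilde i t ω‖ ≤ C)
    -- intensity processes, jointly measurable, with E[∫₀^τ λ₁] < ∞
    (lam : ℕ → ℝ → Ω → ℝ) (hlam_nonneg : ∀ i t ω, 0 ≤ lam i t ω)
    (hlam_meas : ∀ i, Measurable fun x : ℝ × Ω => lam i x.1 x.2)
    (hlam_intble : ∀ i, ∀ᵐ ω ∂μ,
        IntervalIntegrable (fun u => lam i u ω) volume 0 τ)
    (hΛ_int : Integrable (fun ω => ∫ u in (0:ℝ)..τ, lam 0 u ω) μ)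
    -- the pairs (K̃ᵢ, λᵢ) are pairwise i.i.d. as path-space elements
    (path : ℕ → Ω → ℝ → (Fin p → Fin q → ℝ) × ℝ)
    (hpath : ∀ i ω t, path i ω t = (Ktilde i t ω, lam i t ω))
    (hpath_meas : ∀ i, Measurable (path i))
    (hpath_indep : ∀ i j, i ≠ j → IndepFun (path i) (path j) μ)
    (hpath_ident : ∀ i, Measure.map (path i) μ = Measure.map (path 0) μ) :
    ∀ ε > (0:ℝ),
      Tendsto (fun (n : ℕ) => μ {ω | ∃ t ∈ Icc (0:ℝ) τ,
          ε ≤ ‖(fun l m => ((n : ℝ)⁻¹ *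
                  ∑ i ∈ Finset.range n,
                    ∫ u in (0:ℝ)..t, Ktilde i u ω l m * lam i u ω) -
                ∫ u in (0:ℝ)..t,
                  ∫ ω', Ktilde 0 u ω' l m * lam 0 u ω' ∂μ)‖})
        atTop (nhds 0) := by
  intro ε hε
  refine tendsto_measure_exists_le_norm_pi hε fun l =>
    tendsto_measure_exists_le_norm_pi hε fun m => ?_
  set f : ℕ → ℝ → Ω → ℝ := fun i u ω => Ktilde i u ω l m * lam i u ω
  have hf_path : ∀ i u, f i u = (fun ψ => (ψ u).1 l m * (ψ u).2) ∘ path i := fun i u => by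
    ext ω
    simp [f, hpath]
  have hF : ∀ u, Measurable fun ψ : ℝ → (Fin p → Fin q → ℝ) × ℝ => (ψ u).1 l m * (ψ u).2 :=
    fun u => by fun_prop
  have hident : ∀ i u, IdentDistrib (f i u) (f 0 u) μ μ := fun i u => by
    rw [hf_path, hf_path]
    exact IdentDistrib.comp ⟨(hpath_meas i).aemeasurable, (hpath_meas 0).aemeasurable,
      hpath_ident i⟩ (hF u)
  have hindep : ∀ u, Pairwise fun i j => f i u ⟂ᵢ[μ] f j u := fun u i j hij => by
    dsimp only
    rw [hf_path, hf_path]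
    exact (hpath_indep i j hij).comp (hF u) (hF u)
  have hf_meas : ∀ i, Measurable (uncurry (f i)) := fun i =>
    ((measurable_pi_apply m).comp ((measurable_pi_apply l).comp (Ktilde_meas i))).mul
      (hlam_meas i)
  have hbound : ∀ᵐ ω ∂μ, ∀ i, ∀ u ∈ Ioc 0 τ, ‖f i u ω‖ ≤ C * lam i u ω := by
    filter_upwards [Ktilde_bdd] with ω hK i u hu
    exact norm_apply_apply_mul_le (hK i u (Ioc_subset_Icc_self hu)) (hlam_nonneg i u ω) l m
  have hint : Integrable (uncurry (f 0)) ((volume.restrict (Ioc 0 τ)).prod μ) :=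
    integrable_uncurry_of_forall_mem_norm_le (G := fun u ω => C * lam 0 u ω) measurableSet_Ioc
      ((integrable_uncurry_of_integrable_intervalIntegral hτ.le (hlam_nonneg 0) (hlam_meas 0)
        (hlam_intble 0) hΛ_int).const_mul C) (hf_meas 0).aestronglyMeasurable
      (by filter_upwards [hbound] with ω h using h 0)
  have hpaths : ∀ᵐ ω ∂μ, ∀ i, IntegrableOn (fun u => f i u ω) (Ioc 0 τ) := by
    filter_upwards [hbound, ae_all_iff.2 hlam_intble] with ω hb hlam i
    exact (((intervalIntegrable_iff_integrableOn_Ioc_of_le hτ.le).1 (hlam i)).const_mul C).mono'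
      ((hf_meas i).comp measurable_prodMk_right).aestronglyMeasurable
      (ae_restrict_of_forall_mem measurableSet_Ioc (hb i))
  simpa only [smul_eq_mul] using tendsto_measure_exists_le_norm_smul_sum_intervalIntegral_sub
    (fun i => (hf_meas i).stronglyMeasurable) hindep hident hint hpaths hε
end

section
/- For all 0 ≤ s ≤ t ≤ τ, E[D^ε(t) | F₂(s)] = D^ε(s) + n^{−1/2} · E[G₁ · 1{|G₁| ≥ ε √n}] · Σ_{i=1}^n (Nᵢ(t) − Nᵢ(s)) almost surely. Consequently, if E[G₁ · 1{|G₁| ≥ ε √n}] ≠ 0 and P(Σ_{i=1}^n (Nᵢ(t) − Nᵢ(s)) ≥ 1) > 0 for some 0 ≤ s < t ≤ τ, then D^ε is not a martingale with respect to (F₂(t))_{t∈[0,τ]}; thus for multiplier distributions with E[G₁·1{|G₁| ≥ ε√n}] ≠ 0 (for instance asymmetric zero-mean distributions), the ε-jump process of the wild bootstrap martingale fails the martingale property (Example 3.1). -/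
/-!
Write `D^ε(t) - D^ε(s) = n^{-1/2} Σᵢ h(Gᵢ) (Nᵢ(t) - Nᵢ(s))` with `h(x) = x 1{|x| ≥ ε√n}`. The
`i`-th increment vanishes unless `s < Tᵢ`, and on that `𝒟`-measurable event `Gᵢ Nᵢ(s) = 0`, so
there `F₂(s)` coincides with the σ-algebra generated by `𝒟` and the other individuals, which is
independent of `Gᵢ`. Hence the increment has conditional expectation `E[h(G₁)] (Nᵢ(t) - Nᵢ(s))`,
and when `E[h(G₁)] ≠ 0` the martingale property would force `Σᵢ (Nᵢ(t) - Nᵢ(s)) = 0` a.s.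
-/

open MeasureTheory ProbabilityTheory Filter Set

theorem Filter.EventuallyEq.not_eventuallyEq_of_add_mul {α : Type*} {l : Filter α}
    {f g S : α → ℝ} {κ : ℝ} (h : f =ᶠ[l] fun x => g x + κ * S x) (hκ : κ ≠ 0)
    (hS : ¬ S =ᶠ[l] 0) : ¬ f =ᶠ[l] g := fun hfg => hS <| by
  filter_upwards [hfg.symm.trans h] with x hx
  simpa [hκ] using hx

namespace MeasureTheory

variable {Ω : Type*} {m m' m0 : MeasurableSpace Ω} {μ : Measure Ω} [IsFiniteMeasure μ]

theorem condExp_ae_eq_of_comap_subtype_le {E : Set Ω} {f : Ω → ℝ} (hm : m ≤ m0) (hm' : m' ≤ m)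
    (hE : MeasurableSet[m'] E) (htrace : m.comap ((↑) : E → Ω) ≤ m'.comap (↑))
    (hf : ∀ ω ∉ E, f ω = 0) : μ[f | m] =ᵐ[μ] μ[f | m'] := by
  have hE0 : MeasurableSet E := hm _ (hm' _ hE)
  have hfE : E.indicator f = f := indicator_eq_self.mpr fun ω hω => by_contra fun h => hω (hf ω h)
  have hf0 : f =ᵐ[μ.restrict Eᶜ] 0 := (ae_restrict_iff' hE0.compl).mpr (.of_forall hf)
  have htrace' (B : Set Ω) : MeasurableSet[m] (E ∩ B) ↔ MeasurableSet[m'] (E ∩ B) :=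
    ⟨fun hB => by simpa using @MeasurableSet.subtype_image Ω m' E _ hE (htrace _ ⟨E ∩ B, hB, rfl⟩),
      fun hB => hm' _ hB⟩
  have hon : E.indicator (μ[f | m]) =ᵐ[μ] E.indicator (μ[f | m']) :=
    (ae_eq_restrict_iff_indicator_ae_eq hE0).mp
      (condExp_ae_eq_restrict_of_measurableSpace_eq_on hm (hm'.trans hm) (hm' _ hE) htrace')
  calc μ[f | m] = μ[E.indicator f | m] := by rw [hfE]
    _ =ᵐ[μ] E.indicator (μ[f | m]) := condExp_indicator_aux (hm' _ hE) hf0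
    _ =ᵐ[μ] E.indicator (μ[f | m']) := hon
    _ =ᵐ[μ] μ[E.indicator f | m'] := (condExp_indicator_aux hE hf0).symm
    _ = μ[f | m'] := by rw [hfE]

theorem condExp_mul_ae_eq_integral_mul_of_indep {mY : MeasurableSpace Ω} (hmY : mY ≤ m0)
    (hm : m ≤ m0) {Y A : Ω → ℝ} (hY : StronglyMeasurable[mY] Y) (hYint : Integrable Y μ)
    (hA : StronglyMeasurable[m] A) {C : ℝ} (hA_bdd : ∀ ω, |A ω| ≤ C) (hind : Indep mY m μ) :
    μ[Y * A | m] =ᵐ[μ] fun ω => μ[Y] * A ω := by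
  rw [mul_comm]
  filter_upwards [condExp_stronglyMeasurable_mul_of_bound hm hA hYint C (.of_forall hA_bdd),
    condExp_indep_eq hmY hm hY hind] with ω hpull hindep
  rw [hpull, Pi.mul_apply, hindep, mul_comm]

end MeasureTheory

theorem Measurable.ite_le_one_zero {Ω : Type*} {m : MeasurableSpace Ω} {f : Ω → ℝ}
    (hf : Measurable[m] f) (s : ℝ) : Measurable[m] fun ω => if f ω ≤ s then (1 : ℝ) else 0 :=
  Measurable.ite (hf measurableSet_Iic) measurable_const measurable_const

noncomputable def largePart (c x : ℝ) : ℝ := x * if c ≤ |x| then 1 else 0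

theorem measurable_largePart (c : ℝ) : Measurable (largePart c) :=
  measurable_id.mul (Measurable.ite (measurableSet_le measurable_const measurable_abs)
    measurable_const measurable_const)

theorem abs_largePart_le (c x : ℝ) : |largePart c x| ≤ |x| := by
  unfold largePart; split_ifs <;> simp

theorem MeasureTheory.Integrable.largePart_comp {Ω : Type*} [MeasurableSpace Ω] {μ : Measure Ω}
    {f : Ω → ℝ} (hf : Integrable f μ) (c : ℝ) : Integrable (fun ω => largePart c (f ω)) μ :=
  hf.mono ((measurable_largePart c).comp_aemeasurable hf.aemeasurable).aestronglyMeasurable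
    (.of_forall fun ω => abs_largePart_le c (f ω))

section WildBootstrap

variable {Ω ι : Type*} {𝒟 : MeasurableSpace Ω} {G T : ι → Ω → ℝ}

/-- `wildBootstrapSigma 𝒟 G T univ s` is the paper's `F₂(s)`. -/
noncomputable abbrev wildBootstrapSigma (𝒟 : MeasurableSpace Ω) (G T : ι → Ω → ℝ) (S : Set ι)
    (s : ℝ) : MeasurableSpace Ω :=
  𝒟 ⊔ ⨆ j ∈ S, MeasurableSpace.comap (fun ω => G j ω * if T j ω ≤ s then 1 else 0) inferInstance

theorem comap_stoppedMultiplier_le {j : ι} (hT : Measurable[𝒟] (T j)) (s : ℝ) :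
    MeasurableSpace.comap (fun ω => G j ω * if T j ω ≤ s then 1 else 0) inferInstance ≤
      𝒟 ⊔ MeasurableSpace.comap (G j) inferInstance :=
  measurable_iff_comap_le.mp <| ((comap_measurable (G j)).mono le_sup_right le_rfl).mul
    ((hT.ite_le_one_zero s).mono le_sup_left le_rfl)

theorem wildBootstrapSigma_mono {S S' : Set ι} (hSS' : S ⊆ S') (s : ℝ) :
    wildBootstrapSigma 𝒟 G T S s ≤ wildBootstrapSigma 𝒟 G T S' s :=
  sup_le_sup_left (biSup_mono hSS') _

theorem comap_subtype_wildBootstrapSigma_le (S : Set ι) (i : ι) (s : ℝ) :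
    (wildBootstrapSigma 𝒟 G T S s).comap ((↑) : {ω | s < T i ω} → Ω) ≤
      (wildBootstrapSigma 𝒟 G T (S \ {i}) s).comap (↑) := by
  simp only [wildBootstrapSigma, MeasurableSpace.comap_sup, MeasurableSpace.comap_iSup]
  refine sup_le_sup_left (iSup₂_le fun j hj => ?_) _
  by_cases hji : j = i
  · subst hji
    have hzero : (fun ω => G j ω * if T j ω ≤ s then (1 : ℝ) else 0) ∘
        ((↑) : {ω | s < T j ω} → Ω) = fun _ => 0 :=
      funext fun ω => by simp [not_le.mpr (show s < T j ω from ω.2)]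
    rw [MeasurableSpace.comap_comp, hzero, MeasurableSpace.comap_const]
    exact bot_le
  · exact le_iSup₂_of_le (f := fun j (_ : j ∈ S \ {i}) => _) j ⟨hj, hji⟩ le_rfl

theorem le_wildBootstrapSigma (S : Set ι) (s : ℝ) : 𝒟 ≤ wildBootstrapSigma 𝒟 G T S s :=
  le_sup_left

theorem le_wildBootstrapSigma_of_mem {S : Set ι} {j : ι} (hj : j ∈ S) (s : ℝ) :
    MeasurableSpace.comap (fun ω => G j ω * if T j ω ≤ s then 1 else 0) inferInstance ≤
      wildBootstrapSigma 𝒟 G T S s :=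
  le_sup_of_le_right (le_biSup (fun j => MeasurableSpace.comap
    (fun ω => G j ω * if T j ω ≤ s then (1 : ℝ) else 0) inferInstance) hj)

variable [m0 : MeasurableSpace Ω] {μ : Measure Ω}

theorem wildBootstrapSigma_le (h𝒟 : 𝒟 ≤ m0) (hT : ∀ j, Measurable[𝒟] (T j))
    (hG : ∀ j, Measurable (G j)) (S : Set ι) (s : ℝ) : wildBootstrapSigma 𝒟 G T S s ≤ m0 :=
  sup_le h𝒟 <| iSup₂_le fun j _ =>
    (comap_stoppedMultiplier_le (hT j) s).trans (sup_le h𝒟 (hG j).comap_le)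

theorem indep_wildBootstrapSigma_comap (h𝒟 : 𝒟 ≤ m0) (hT : ∀ j, Measurable[𝒟] (T j))
    (hG : ∀ j, Measurable (G j))
    (hindep : iIndep (fun o : Option ι =>
      o.elim 𝒟 fun j => MeasurableSpace.comap (G j) inferInstance) μ)
    {S : Set ι} {i : ι} (hi : i ∉ S) (s : ℝ) :
    Indep (wildBootstrapSigma 𝒟 G T S s) (MeasurableSpace.comap (G i) inferInstance) μ := by
  set κ := fun o : Option ι => o.elim 𝒟 fun j => MeasurableSpace.comap (G j) inferInstance
  have hκ : ∀ o, κ o ≤ m0 := by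
    rintro (_ | j)
    exacts [h𝒟, (hG j).comap_le]
  have hsplit := indep_iSup_of_disjoint hκ hindep (disjoint_compl_left (a := {some i}))
  rw [iSup_singleton] at hsplit
  have hnone : 𝒟 ≤ ⨆ o ∈ ({some i} : Set (Option ι))ᶜ, κ o :=
    le_biSup κ (show none ∈ ({some i} : Set (Option ι))ᶜ by simp)
  refine indep_of_indep_of_le_left hsplit (sup_le hnone (iSup₂_le fun j hj => ?_))
  refine (comap_stoppedMultiplier_le (hT j) s).trans (sup_le hnone ?_)
  exact le_biSup κ (show some j ∈ ({some i} : Set (Option ι))ᶜ by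
    simpa using fun h : j = i => hi (h ▸ hj))

theorem condExp_mul_ae_eq_integral_mul [IsFiniteMeasure μ] (h𝒟 : 𝒟 ≤ m0)
    (hT : ∀ j, Measurable[𝒟] (T j)) (hG : ∀ j, Measurable (G j))
    (hindep : iIndep (fun o : Option ι =>
      o.elim 𝒟 fun j => MeasurableSpace.comap (G j) inferInstance) μ)
    {φ : ℝ → ℝ} (hφ : Measurable φ) {i : ι} (hφG : Integrable (fun ω => φ (G i ω)) μ)
    {A : Ω → ℝ} (hA : Measurable[𝒟] A) {C : ℝ} (hA_bdd : ∀ ω, |A ω| ≤ C) {s : ℝ}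
    (hA_supp : ∀ ω, T i ω ≤ s → A ω = 0) (S : Set ι) :
    μ[fun ω => φ (G i ω) * A ω | wildBootstrapSigma 𝒟 G T S s] =ᵐ[μ]
      fun ω => (∫ ω', φ (G i ω') ∂μ) * A ω := by
  calc μ[fun ω => φ (G i ω) * A ω | wildBootstrapSigma 𝒟 G T S s]
      =ᵐ[μ] μ[fun ω => φ (G i ω) * A ω | wildBootstrapSigma 𝒟 G T (S \ {i}) s] :=
        condExp_ae_eq_of_comap_subtype_le (wildBootstrapSigma_le h𝒟 hT hG S s)
          (wildBootstrapSigma_mono sdiff_subset s)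
          (le_wildBootstrapSigma _ s _ (hT i measurableSet_Ioi))
          (comap_subtype_wildBootstrapSigma_le S i s)
          fun ω hω => by simp [hA_supp ω (not_lt.mp hω)]
    _ =ᵐ[μ] fun ω => (∫ ω', φ (G i ω') ∂μ) * A ω :=
        condExp_mul_ae_eq_integral_mul_of_indep (hG i).comap_le
          (wildBootstrapSigma_le h𝒟 hT hG _ s)
          (hφ.comp (comap_measurable (G i))).stronglyMeasurable hφG
          (hA.mono (le_wildBootstrapSigma _ s) le_rfl).stronglyMeasurable hA_bdd
          (indep_wildBootstrapSigma_comap h𝒟 hT hG hindep (by simp) s).symm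

theorem condExp_sum_mul_indicator_ae_eq [Fintype ι] [IsFiniteMeasure μ] (h𝒟 : 𝒟 ≤ m0)
    (hT : ∀ j, Measurable[𝒟] (T j)) (hG : ∀ j, Measurable (G j))
    (hindep : iIndep (fun o : Option ι =>
      o.elim 𝒟 fun j => MeasurableSpace.comap (G j) inferInstance) μ)
    (hident : ∀ i j, μ.map (G i) = μ.map (G j)) {φ : ℝ → ℝ} (hφ : Measurable φ) (hφ0 : φ 0 = 0)
    (hφG : ∀ i, Integrable (fun ω => φ (G i ω)) μ) (i₀ : ι) {s t : ℝ} (hst : s ≤ t) :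
    μ[fun ω => ∑ i, φ (G i ω) * (if T i ω ≤ t then 1 else 0) | wildBootstrapSigma 𝒟 G T univ s]
      =ᵐ[μ] fun ω => ∑ i, φ (G i ω) * (if T i ω ≤ s then 1 else 0) + (∫ ω', φ (G i₀ ω') ∂μ) *
        ∑ i, ((if T i ω ≤ t then 1 else 0) - if T i ω ≤ s then 1 else 0) := by
  set A : ι → Ω → ℝ := fun i ω => (if T i ω ≤ t then 1 else 0) - if T i ω ≤ s then 1 else 0
  have hA_bdd i ω : |A i ω| ≤ 1 := by simp only [A]; split_ifs <;> simp
  have hA_supp i ω (h : T i ω ≤ s) : A i ω = 0 := by simp [A, h, h.trans hst]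
  have hA_meas i : Measurable[𝒟] (A i) :=
    ((hT i).ite_le_one_zero t).sub ((hT i).ite_le_one_zero s)
  have hincr_int i : Integrable (fun ω => φ (G i ω) * A i ω) μ :=
    (hφG i).mul_bdd ((hA_meas i).mono h𝒟 le_rfl).aestronglyMeasurable (.of_forall (hA_bdd i))
  set X : Ω → ℝ := fun ω => ∑ i, φ (G i ω) * (if T i ω ≤ s then 1 else 0)
  have hX_int : Integrable X μ := integrable_finsetSum _ fun i _ =>
    (hφG i).mul_bdd (c := 1) (((hT i).ite_le_one_zero s).mono h𝒟 le_rfl).aestronglyMeasurable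
      (.of_forall fun ω => by split_ifs <;> simp)
  have hX_meas : StronglyMeasurable[wildBootstrapSigma 𝒟 G T univ s] X := by
    refine (Finset.measurable_sum _ fun i _ => ?_).stronglyMeasurable
    have hobs : (fun ω => φ (G i ω) * if T i ω ≤ s then 1 else 0) =
        φ ∘ fun ω => G i ω * if T i ω ≤ s then 1 else 0 :=
      funext fun ω => by by_cases h : T i ω ≤ s <;> simp [h, hφ0]
    rw [hobs]
    exact (hφ.comp (comap_measurable _)).mono (le_wildBootstrapSigma_of_mem (mem_univ i) s) le_rfl
  have hsplit : (fun ω => ∑ i, φ (G i ω) * (if T i ω ≤ t then 1 else 0)) =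
      X + ∑ i, fun ω => φ (G i ω) * A i ω := by
    funext ω
    simp only [X, A, Pi.add_apply, Finset.sum_apply, ← Finset.sum_add_distrib, mul_sub]
    simp
  have hmean i : ∫ ω, φ (G i ω) ∂μ = ∫ ω, φ (G i₀ ω) ∂μ :=
    ((IdentDistrib.mk (hG i).aemeasurable (hG i₀).aemeasurable (hident i i₀)).comp hφ).integral_eq
  rw [hsplit]
  filter_upwards [condExp_add hX_int (integrable_finsetSum' _ fun i _ => hincr_int i) _,
    condExp_finsetSum (fun i _ => hincr_int i) _, ae_all_iff.mpr fun i =>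
      condExp_mul_ae_eq_integral_mul h𝒟 hT hG hindep hφ (hφG i) (hA_meas i) (hA_bdd i)
        (hA_supp i) univ] with ω hadd hsum hincr
  rw [hadd, Pi.add_apply, condExp_of_stronglyMeasurable (wildBootstrapSigma_le h𝒟 hT hG _ s)
    hX_meas hX_int, hsum, Finset.sum_apply, Finset.mul_sum]
  exact congrArg (X ω + ·) (Finset.sum_congr rfl fun i _ => by rw [hincr i, hmean i])

end WildBootstrap

theorem epsilon_jump_process_not_martingale_general
    {Ω : Type*}
    -- the data σ-algebra 𝒟
    (𝒟 : MeasurableSpace Ω) [m0 : MeasurableSpace Ω] (h𝒟 : 𝒟 ≤ m0)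
    (μ : Measure Ω) [IsProbabilityMeasure μ]
    (τ : ℝ) (n : ℕ) (hn : 0 < n) (ε : ℝ)
    -- single-jump times, 𝒟-measurable, positive, a.s. pairwise distinct
    (T : Fin n → Ω → ℝ)
    (hT_meas : ∀ i, Measurable[𝒟] (T i))
    -- counting processes with at most one jump each
    (N : Fin n → ℝ → Ω → ℝ)
    (hN : ∀ i t ω, N i t ω = if T i ω ≤ t then (1 : ℝ) else 0)
    -- i.i.d. integrable zero-mean multipliers, jointly independent of 𝒟
    (G : Fin n → Ω → ℝ)
    (hG_meas : ∀ i, Measurable (G i))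
    (hG_int : ∀ i, Integrable (G i) μ)
    (hG_indep : iIndep (fun o : Option (Fin n) =>
        o.elim 𝒟 fun i => MeasurableSpace.comap (G i) inferInstance) μ)
    (hG_ident : ∀ i j, Measure.map (G i) μ = Measure.map (G j) μ)
    -- the wild bootstrap filtration F₂(t)
    (F₂ : ℝ → MeasurableSpace Ω)
    (hF₂ : ∀ t, F₂ t = 𝒟 ⊔ ⨆ i : Fin n,
        MeasurableSpace.comap
          (fun ω => G i ω * (if T i ω ≤ t then (1 : ℝ) else 0)) inferInstance)
    -- the ε-jump process of the wild bootstrap martingale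
    (Dε : ℝ → Ω → ℝ)
    (hDε : ∀ t ω, Dε t ω = (Real.sqrt n)⁻¹ *
        ∑ i, G i ω * (if ε * Real.sqrt n ≤ |G i ω| then (1 : ℝ) else 0) *
          N i t ω) :
    (∀ s t : ℝ, 0 ≤ s → s ≤ t → t ≤ τ →
        μ[Dε t | F₂ s] =ᵐ[μ]
          fun ω => Dε s ω + (Real.sqrt n)⁻¹ *
            (∫ ω', G ⟨0, hn⟩ ω' *
                (if ε * Real.sqrt n ≤ |G ⟨0, hn⟩ ω'| then (1 : ℝ) else 0) ∂μ) *
            ∑ i, (N i t ω - N i s ω)) ∧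
    ((∫ ω', G ⟨0, hn⟩ ω' *
          (if ε * Real.sqrt n ≤ |G ⟨0, hn⟩ ω'| then (1 : ℝ) else 0) ∂μ) ≠ 0 →
      (∃ s t : ℝ, 0 ≤ s ∧ s < t ∧ t ≤ τ ∧
          0 < μ {ω | 1 ≤ ∑ i, (N i t ω - N i s ω)}) →
      ¬ (∀ s t : ℝ, 0 ≤ s → s ≤ t → t ≤ τ →
          μ[Dε t | F₂ s] =ᵐ[μ] Dε s)) := by
  obtain rfl : N = fun i t ω => if T i ω ≤ t then (1 : ℝ) else 0 :=
    funext fun i => funext fun t => funext (hN i t)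
  have hF₂' s : F₂ s = wildBootstrapSigma 𝒟 G T univ s := by
    rw [hF₂, wildBootstrapSigma, iSup_univ]
  have hDε' u : Dε u = (Real.sqrt n)⁻¹ • fun ω =>
      ∑ i, largePart (ε * Real.sqrt n) (G i ω) * if T i ω ≤ u then 1 else 0 := funext (hDε u)
  have hformula : ∀ s t, s ≤ t → μ[Dε t | F₂ s] =ᵐ[μ] fun ω => Dε s ω + (Real.sqrt n)⁻¹ *
      (∫ ω', G ⟨0, hn⟩ ω' * (if ε * Real.sqrt n ≤ |G ⟨0, hn⟩ ω'| then (1 : ℝ) else 0) ∂μ) *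
      ∑ i, ((if T i ω ≤ t then (1 : ℝ) else 0) - if T i ω ≤ s then 1 else 0) := by
    intro s t hst
    rw [hF₂' s, hDε' t]
    filter_upwards [condExp_smul (μ := μ) (Real.sqrt n)⁻¹ (fun ω =>
        ∑ i, largePart (ε * Real.sqrt n) (G i ω) * if T i ω ≤ t then 1 else 0) _,
      condExp_sum_mul_indicator_ae_eq h𝒟 hT_meas hG_meas hG_indep hG_ident
        (measurable_largePart _) (by simp [largePart]) (fun i => (hG_int i).largePart_comp _)
        ⟨0, hn⟩ hst] with ω hsmul hsum
    rw [hsmul, Pi.smul_apply, hsum, hDε', smul_eq_mul, mul_add, mul_assoc]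
    rfl
  refine ⟨fun s t _ hst _ => hformula s t hst, ?_⟩
  rintro hκ ⟨s, t, hs, hst, htτ, hpos⟩ hmart
  refine (hformula s t hst.le).not_eventuallyEq_of_add_mul (mul_ne_zero (by positivity) hκ)
    (fun hzero => hpos.ne' (measure_mono_null ?_ (ae_iff.mp hzero))) (hmart s t hs hst.le htτ)
  intro ω hω h0
  simp only [mem_ofPred_eq, Pi.zero_apply] at hω h0
  linarith

/-- **Example 3.1 (Part I).**
For the ε-jump process `D^ε(t) = n^{-1/2} Σᵢ Gᵢ 1{|Gᵢ| ≥ ε√n} Nᵢ(t)` of the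
wild bootstrap martingale `D*(t) = n^{-1/2} Σᵢ Gᵢ Nᵢ(t)`, one has, for all
`0 ≤ s ≤ t ≤ τ`,
`E[D^ε(t) | F₂(s)] = D^ε(s) + n^{-1/2} E[G₁ 1{|G₁| ≥ ε√n}] Σᵢ (Nᵢ(t) − Nᵢ(s))`
a.s.; consequently, if `E[G₁ 1{|G₁| ≥ ε√n}] ≠ 0` and
`P(Σᵢ(Nᵢ(t) − Nᵢ(s)) ≥ 1) > 0` for some `0 ≤ s < t ≤ τ`, then `D^ε` is not a
martingale with respect to `(F₂(t))_{t∈[0,τ]}`. -/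
theorem epsilon_jump_process_not_martingale
    {Ω : Type*}
    -- the data σ-algebra 𝒟
    (𝒟 : MeasurableSpace Ω) [m0 : MeasurableSpace Ω] (h𝒟 : 𝒟 ≤ m0)
    (μ : Measure Ω) [IsProbabilityMeasure μ]
    (τ : ℝ) (hτ : 0 < τ) (n : ℕ) (hn : 0 < n) (ε : ℝ) (hε : 0 < ε)
    -- single-jump times, 𝒟-measurable, positive, a.s. pairwise distinct
    (T : Fin n → Ω → ℝ)
    (hT_meas : ∀ i, Measurable[𝒟] (T i))
    (hT_pos : ∀ i ω, 0 < T i ω)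
    (hT_distinct : ∀ᵐ ω ∂μ, ∀ i j : Fin n, i ≠ j → T i ω ≠ T j ω)
    -- counting processes with at most one jump each
    (N : Fin n → ℝ → Ω → ℝ)
    (hN : ∀ i t ω, N i t ω = if T i ω ≤ t then (1 : ℝ) else 0)
    -- i.i.d. integrable zero-mean multipliers, jointly independent of 𝒟
    (G : Fin n → Ω → ℝ)
    (hG_meas : ∀ i, Measurable (G i))
    (hG_int : ∀ i, Integrable (G i) μ)
    (hG_indep : iIndep (fun o : Option (Fin n) =>
        o.elim 𝒟 fun i => MeasurableSpace.comap (G i) inferInstance) μ)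
    (hG_ident : ∀ i j, Measure.map (G i) μ = Measure.map (G j) μ)
    (hG_mean : ∀ i, ∫ ω, G i ω ∂μ = 0)
    -- the wild bootstrap filtration F₂(t)
    (F₂ : ℝ → MeasurableSpace Ω)
    (hF₂ : ∀ t, F₂ t = 𝒟 ⊔ ⨆ i : Fin n,
        MeasurableSpace.comap
          (fun ω => G i ω * (if T i ω ≤ t then (1 : ℝ) else 0)) inferInstance)
    -- the ε-jump process of the wild bootstrap martingale
    (Dε : ℝ → Ω → ℝ)
    (hDε : ∀ t ω, Dε t ω = (Real.sqrt n)⁻¹ *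
        ∑ i, G i ω * (if ε * Real.sqrt n ≤ |G i ω| then (1 : ℝ) else 0) *
          N i t ω) :
    (∀ s t : ℝ, 0 ≤ s → s ≤ t → t ≤ τ →
        μ[Dε t | F₂ s] =ᵐ[μ]
          fun ω => Dε s ω + (Real.sqrt n)⁻¹ *
            (∫ ω', G ⟨0, hn⟩ ω' *
                (if ε * Real.sqrt n ≤ |G ⟨0, hn⟩ ω'| then (1 : ℝ) else 0) ∂μ) *
            ∑ i, (N i t ω - N i s ω)) ∧
    ((∫ ω', G ⟨0, hn⟩ ω' *
          (if ε * Real.sqrt n ≤ |G ⟨0, hn⟩ ω'| then (1 : ℝ) else 0) ∂μ) ≠ 0 →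
      (∃ s t : ℝ, 0 ≤ s ∧ s < t ∧ t ≤ τ ∧
          0 < μ {ω | 1 ≤ ∑ i, (N i t ω - N i s ω)}) →
      ¬ (∀ s t : ℝ, 0 ≤ s → s ≤ t → t ≤ τ →
          μ[Dε t | F₂ s] =ᵐ[μ] Dε s)) :=
  epsilon_jump_process_not_martingale_general 𝒟 (m0 := m0) h𝒟 μ τ n hn ε T hT_meas N hN G hG_meas
    hG_int hG_indep hG_ident F₂ hF₂ Dε hDε
end

section
/- The map Γ is Fréchet differentiable at every point (β₀, A₀) ∈ ℝ^q × C([0,τ], ℝ), with derivative the bounded linear map dΓ(β₀, A₀) : ℝ^q × C([0,τ], ℝ) → C([0,τ], ℝ) given by dΓ(β₀, A₀)(x, y)(t) = exp(−exp(⟨Z, β₀⟩) · A₀(t)) · exp(⟨Z, β₀⟩) · ( A₀(t) · ⟨Z, x⟩ + y(t) ), for t ∈ [0,τ]. In particular Γ is Hadamard differentiable with exactly the derivative asserted in Lemma II.4 (lem:Hadamard) of the paper: dΓ(θ)·(x,y) = exp(−exp(⟨Z,β⟩)A) · exp(⟨Z,β⟩) · [A · Zᵀx + y] at θ = (β, A).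 -/
/- In the commutative Banach algebra `C([0,τ], ℝ)` one has `Γ(β, A) = 1 - exp(-e^{⟨Z,β⟩} • A)`
with `exp` the Banach-algebra exponential, whose derivative at `a` is multiplication by `exp a`.
The product rule for `(β, A) ↦ e^{⟨Z,β⟩} • A` and the chain rule then give the derivative, and
evaluating at `t` (evaluation is a continuous ring homomorphism, so it commutes with `exp`)
turns it into the stated formula. -/

open MeasureTheory Filter Set

/-- The Fine–Gray cumulative incidence functional
`Γ(β, A)(t) = 1 − exp(−exp⟨Z,β⟩ · A(t))` on `ℝ^q × C([0,τ], ℝ)`. -/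
noncomputable def fineGrayCIF (τ : ℝ) {q : ℕ} (Z : Fin q → ℝ)
    (θ : (Fin q → ℝ) × C(Icc (0:ℝ) τ, ℝ)) : C(Icc (0:ℝ) τ, ℝ) where
  toFun t := 1 - Real.exp (-(Real.exp (∑ k, Z k * θ.1 k)) * θ.2 t)
  continuous_toFun := by fun_prop

namespace ContinuousMap

theorem exp_apply {X 𝔸 : Type*} [TopologicalSpace X] [CompactSpace X] [NormedRing 𝔸]
    [NormedAlgebra ℚ 𝔸] [CompleteSpace 𝔸] (f : C(X, 𝔸)) (x : X) :
    NormedSpace.exp f x = NormedSpace.exp (f x) :=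
  NormedSpace.map_exp ((Pi.evalRingHom _ x).comp coeFnRingHom) (continuous_eval_const x) f

end ContinuousMap

section

open ContinuousLinearMap NormedSpace

variable {E : Type*} [NormedAddCommGroup E] [NormedSpace ℝ E]

theorem hasFDerivAt_exp_smul_snd {F : Type*} [NormedAddCommGroup F] [NormedSpace ℝ F]
    (ℓ : E →L[ℝ] ℝ) (β₀ : E) (A₀ : F) :
    HasFDerivAt (fun θ : E × F => Real.exp (ℓ θ.1) • θ.2)
      (Real.exp (ℓ β₀) • ((ℓ.comp (fst ℝ E F)).smulRight A₀ + snd ℝ E F)) (β₀, A₀) := by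
  refine (((ℓ.comp (fst ℝ E F)).hasFDerivAt.exp).smul hasFDerivAt_snd).congr_fderiv ?_
  refine ContinuousLinearMap.ext fun θ => ?_
  simp [add_comm, mul_smul]

theorem hasFDerivAt_one_sub_exp_neg_exp_smul {𝔸 : Type*} [NormedCommRing 𝔸] [NormedAlgebra ℝ 𝔸]
    [CompleteSpace 𝔸] (ℓ : E →L[ℝ] ℝ) (β₀ : E) (A₀ : 𝔸) :
    HasFDerivAt (fun θ : E × 𝔸 => 1 - exp (-(Real.exp (ℓ θ.1) • θ.2)))
      ((Real.exp (ℓ β₀) • exp (-(Real.exp (ℓ β₀) • A₀))) •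
        ((ℓ.comp (fst ℝ E 𝔸)).smulRight A₀ + snd ℝ E 𝔸)) (β₀, A₀) := by
  refine ((hasFDerivAt_exp.comp (β₀, A₀) (hasFDerivAt_exp_smul_snd ℓ β₀ A₀).neg).const_sub
    1).congr_fderiv ?_
  refine ContinuousLinearMap.ext fun θ => ?_
  simp

end

theorem fineGrayCIF_eq_one_sub_exp (τ : ℝ) {q : ℕ} (Z : Fin q → ℝ) :
    fineGrayCIF τ Z = fun θ => 1 - NormedSpace.exp
      (-(Real.exp ((dotProductBilin ℝ ℝ Z).toContinuousLinearMap θ.1) • θ.2)) := by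
  ext θ t
  simp [fineGrayCIF, ContinuousMap.exp_apply, ← Real.exp_eq_exp_ℝ, dotProduct]

theorem fineGrayCIF_hasFDerivAt_general (τ : ℝ) (q : ℕ)
    (Z : Fin q → ℝ) :
    ∀ (β₀ : Fin q → ℝ) (A₀ : C(Icc (0:ℝ) τ, ℝ)),
      ∃ L : ((Fin q → ℝ) × C(Icc (0:ℝ) τ, ℝ)) →L[ℝ] C(Icc (0:ℝ) τ, ℝ),
        HasFDerivAt (fineGrayCIF τ Z) L (β₀, A₀) ∧
        ∀ (x : Fin q → ℝ) (y : C(Icc (0:ℝ) τ, ℝ)) (t : Icc (0:ℝ) τ),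
          L (x, y) t =
            Real.exp (-(Real.exp (∑ k, Z k * β₀ k)) * A₀ t) *
              Real.exp (∑ k, Z k * β₀ k) *
              (A₀ t * (∑ k, Z k * x k) + y t) := by
  intro β₀ A₀
  rw [fineGrayCIF_eq_one_sub_exp]
  refine ⟨_, hasFDerivAt_one_sub_exp_neg_exp_smul _ β₀ A₀, fun x y t => ?_⟩
  simp only [smul_apply, add_apply,
    ContinuousLinearMap.smulRight_apply, ContinuousLinearMap.comp_apply,
    ContinuousLinearMap.coe_fst', ContinuousLinearMap.coe_snd',
    LinearMap.coe_toContinuousLinearMap', dotProductBilin_apply_apply, dotProduct,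
    ContinuousMap.smul_apply, ContinuousMap.mul_apply, ContinuousMap.add_apply,
    ContinuousMap.neg_apply, ContinuousMap.exp_apply, ← Real.exp_eq_exp_ℝ, smul_eq_mul, neg_mul]
  ring

/-- **Lemma II.4 (lem:Hadamard), Part II.**
The Fine–Gray cumulative incidence functional `Γ` is Fréchet (hence Hadamard)
differentiable at every `(β₀, A₀) ∈ ℝ^q × C([0,τ], ℝ)`, with derivative the
bounded linear map
`(x, y) ↦ (t ↦ exp(−exp⟨Z,β₀⟩ A₀(t)) exp⟨Z,β₀⟩ (A₀(t)⟨Z,x⟩ + y(t)))`. -/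
theorem fineGrayCIF_hasFDerivAt (τ : ℝ) (hτ : 0 < τ) (q : ℕ)
    (Z : Fin q → ℝ) :
    ∀ (β₀ : Fin q → ℝ) (A₀ : C(Icc (0:ℝ) τ, ℝ)),
      ∃ L : ((Fin q → ℝ) × C(Icc (0:ℝ) τ, ℝ)) →L[ℝ] C(Icc (0:ℝ) τ, ℝ),
        HasFDerivAt (fineGrayCIF τ Z) L (β₀, A₀) ∧
        ∀ (x : Fin q → ℝ) (y : C(Icc (0:ℝ) τ, ℝ)) (t : Icc (0:ℝ) τ),
          L (x, y) t =
            Real.exp (-(Real.exp (∑ k, Z k * β₀ k)) * A₀ t) *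
              Real.exp (∑ k, Z k * β₀ k) *
              (A₀ t * (∑ k, Z k * x k) + y t) :=
  fineGrayCIF_hasFDerivAt_general τ q Z
end
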